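/- arXiv:1809.05994 — 10 statements merged into one kernel-verified Lean document; each statement's English description precedes it below -/
import Mathlib

section
/- Let K ⊆ ℝⁿ be a compact set and let V be a finite-dimensional vector subspace of the space C(K,ℝ) of continuous real-valued functions on K such that the functions in V have no common zero on K. If μ is a finite positive Borel measure on K, then there exist an integer r ≤ dim V + 1, points x₁,…,x_r ∈ K and nonnegative reals c₁,…,c_r such that for every f ∈ V one has ∫_K f dμ = Σ_{i=1}^r cᵢ f(xᵢ). -/
/-!
Expand `f ∈ V` in a basis `b₁, …, b_d` of `V`: then `∫ f dμ` is a fixed linear functional of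
the moment vector `∫ φ dμ`, where `φ y = (b₁ y, …, b_d y)`. Since `K` is compact, the range of
`φ` is compact, hence so is its convex hull in `ℝᵈ`; the normalized moment vector `⨍ φ dμ` lies in
that closed convex set, and Carathéodory's theorem writes it as a convex combination of at most
`d + 1` points `φ xᵢ`. Scaling the weights by `μ K` gives the atoms.
-/

open MeasureTheory

open Set Function Module in
theorem exists_fin_finrank_succ_of_mem_convexHull {𝕜 E : Type*} [Field 𝕜] [LinearOrder 𝕜]
    [IsStrictOrderedRing 𝕜] [AddCommGroup E] [Module 𝕜 E] [FiniteDimensional 𝕜 E] {s : Set E}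
    {y : E} (hy : y ∈ convexHull 𝕜 s) :
    ∃ (w : Fin (finrank 𝕜 E + 1) → 𝕜) (z : Fin (finrank 𝕜 E + 1) → E),
      w ∈ stdSimplex 𝕜 _ ∧ (∀ i, z i ∈ s) ∧ ∑ i, w i • z i = y := by
  obtain ⟨z₀, hz₀⟩ := convexHull_nonempty_iff.mp ⟨y, hy⟩
  obtain ⟨ι, _, z, w, hzs, hai, hw, hw1, rfl⟩ := eq_pos_convex_span_of_mem_convexHull hy
  obtain ⟨e⟩ : Nonempty (ι ↪ Fin (finrank 𝕜 E + 1)) :=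
    Embedding.nonempty_of_card_le <| by
      simpa using hai.card_le_finrank_succ.trans (Nat.add_le_add_right (Submodule.finrank_le _) 1)
  have hw' : ∀ j ∉ range e, extend e w 0 j = 0 := fun j hj => extend_apply' _ _ _ hj
  refine ⟨extend e w 0, extend e z fun _ => z₀, ⟨fun j => ?_, ?_⟩, fun j => ?_, ?_⟩
  · by_cases hj : j ∈ range e
    · obtain ⟨i, rfl⟩ := hj
      simpa [e.injective.extend_apply] using (hw i).le
    · simp [hw' j hj]
  · rw [← hw1]
    exact (Fintype.sum_of_injective e e.injective _ _ hw'
      fun i => (e.injective.extend_apply ..).symm).symm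
  · by_cases hj : j ∈ range e
    · obtain ⟨i, rfl⟩ := hj
      simpa [e.injective.extend_apply] using hzs ⟨i, rfl⟩
    · simpa [extend_apply' _ _ _ hj] using hz₀
  · refine (Fintype.sum_of_injective e e.injective _ _ (fun j hj => by simp [hw' j hj])
      fun i => ?_).symm
    simp [e.injective.extend_apply]

open Module in
theorem IsCompact.convexHull {E : Type*} [AddCommGroup E] [Module ℝ E] [FiniteDimensional ℝ E]
    [TopologicalSpace E] [ContinuousAdd E] [ContinuousSMul ℝ E] {s : Set E} (hs : IsCompact s) :
    IsCompact (_root_.convexHull ℝ s) := by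
  have hsum : _root_.convexHull ℝ s =
      (fun p : (Fin (finrank ℝ E + 1) → ℝ) × (Fin (finrank ℝ E + 1) → E) => ∑ i, p.1 i • p.2 i) ''
        (stdSimplex ℝ _ ×ˢ Set.univ.pi fun _ => s) := by
    ext y
    constructor
    · intro hy
      obtain ⟨w, z, hw, hz, rfl⟩ := exists_fin_finrank_succ_of_mem_convexHull hy
      exact ⟨(w, z), ⟨hw, fun i _ => hz i⟩, rfl⟩
    · rintro ⟨⟨w, z⟩, ⟨hw, hz⟩, rfl⟩
      exact (convex_convexHull ℝ s).sum_mem (fun i _ => hw.1 i) hw.2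
        fun i _ => subset_convexHull ℝ s (hz i trivial)
  rw [hsum]
  exact ((isCompact_stdSimplex ℝ _).prod (isCompact_univ_pi fun _ => hs)).image (by fun_prop)

open Module in
theorem MeasureTheory.Integrable.exists_integral_eq_sum_smul {X E : Type*} [MeasurableSpace X]
    {μ : Measure X} [IsFiniteMeasure μ] [NeZero μ] [NormedAddCommGroup E] [NormedSpace ℝ E]
    [FiniteDimensional ℝ E] {φ : X → E} (hφ : Integrable φ μ) (hrange : IsCompact (Set.range φ)) :
    ∃ (w : Fin (finrank ℝ E + 1) → ℝ) (x : Fin (finrank ℝ E + 1) → X),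
      (∀ i, 0 ≤ w i) ∧ ∫ a, φ a ∂μ = ∑ i, w i • φ (x i) := by
  have havg : ⨍ a, φ a ∂μ ∈ convexHull ℝ (Set.range φ) :=
    (convex_convexHull ℝ _).average_mem hrange.convexHull.isClosed
      (ae_of_all _ fun a => subset_convexHull ℝ _ ⟨a, rfl⟩) hφ
  obtain ⟨w, z, hw, hz, hwz⟩ := exists_fin_finrank_succ_of_mem_convexHull havg
  choose x hx using hz
  refine ⟨fun i => μ.real Set.univ * w i, x, fun i => mul_nonneg measureReal_nonneg (hw.1 i), ?_⟩
  rw [← measure_smul_average, ← hwz, Finset.smul_sum]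
  simp [hx, mul_smul]

theorem Module.Basis.exists_continuousLinearMap_eval {X R ι : Type*} [TopologicalSpace X]
    [CommRing R] [TopologicalSpace R] [IsTopologicalRing R] [Fintype ι]
    {V : Submodule R C(X, R)} (b : Basis ι R V) {f : C(X, R)} (hf : f ∈ V) :
    ∃ ℓ : (ι → R) →L[R] R, ∀ y, f y = ℓ fun j => (b j : C(X, R)) y := by
  refine ⟨∑ j, b.repr ⟨f, hf⟩ j • ContinuousLinearMap.proj j, fun y => ?_⟩
  calc f y = ((∑ j, b.repr ⟨f, hf⟩ j • b j : V) : C(X, R)) y := by rw [b.sum_repr]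
    _ = _ := by simp [-Module.Basis.sum_repr]

theorem representable_by_discrete_measure_general {n : ℕ} (K : Set (Fin n → ℝ)) (hK : IsCompact K)
    (V : Submodule ℝ C(K, ℝ)) [FiniteDimensional ℝ V]
    (μ : Measure K) [IsFiniteMeasure μ] :
    ∃ (r : ℕ), r ≤ Module.finrank ℝ V + 1 ∧
      ∃ (x : Fin r → K) (c : Fin r → ℝ), (∀ i, 0 ≤ c i) ∧
        ∀ f ∈ V, ∫ z, (f : C(K, ℝ)) z ∂μ = ∑ i, c i * (f : C(K, ℝ)) (x i) := by
  have : CompactSpace K := isCompact_iff_compactSpace.mp hK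
  rcases eq_or_ne μ 0 with rfl | hμ
  · exact ⟨0, by omega, Fin.elim0, Fin.elim0, fun i => i.elim0, fun f _ => by simp⟩
  have : NeZero μ := ⟨hμ⟩
  let b := Module.finBasis ℝ V
  let φ : K → Fin (Module.finrank ℝ V) → ℝ := fun y j => (b j : C(K, ℝ)) y
  have hφ : Continuous φ := continuous_pi fun j => (b j : C(K, ℝ)).continuous
  have hφint : Integrable φ μ := hφ.integrable_of_hasCompactSupport (.of_compactSpace φ)
  obtain ⟨c, x, hc, hint⟩ := hφint.exists_integral_eq_sum_smul (isCompact_range hφ)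
  refine ⟨_, by simp, x, c, hc, fun f hf => ?_⟩
  obtain ⟨ℓ, hℓ⟩ := b.exists_continuousLinearMap_eval hf
  calc ∫ z, f z ∂μ = ∫ z, ℓ (φ z) ∂μ := by simp only [hℓ]; rfl
    _ = ℓ (∫ z, φ z ∂μ) := ℓ.integral_comp_comm hφint
    _ = ∑ i, c i * f (x i) := by simp [hint, hℓ, φ]

/-- **Blekherman–Fialkow / Tchakaloff**: if `K ⊆ ℝⁿ` is compact, `V` is a
finite-dimensional subspace of `C(K, ℝ)` whose elements have no common zero on `K`,
and `μ` is a finite positive Borel measure on `K`, then the moment functional of `μ`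
on `V` is represented by a positive discrete measure with at most `dim V + 1` atoms. -/
theorem representable_by_discrete_measure {n : ℕ} (K : Set (Fin n → ℝ)) (hK : IsCompact K)
    (V : Submodule ℝ C(K, ℝ)) [FiniteDimensional ℝ V]
    (hnz : ∀ x : K, ∃ f ∈ V, (f : C(K, ℝ)) x ≠ 0)
    (μ : Measure K) [IsFiniteMeasure μ] :
    ∃ (r : ℕ), r ≤ Module.finrank ℝ V + 1 ∧
      ∃ (x : Fin r → K) (c : Fin r → ℝ), (∀ i, 0 ≤ c i) ∧
        ∀ f ∈ V, ∫ z, (f : C(K, ℝ)) z ∂μ = ∑ i, c i * (f : C(K, ℝ)) (x i) :=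
  representable_by_discrete_measure_general K hK V μ
end

section
/- Let X be a finite set of k ≥ 1 points in ℝⁿ and for each p ∈ X set v_p := (1, p₁, …, p_n) ∈ ℝ^{n+1}. Let I(X) ⊆ ℝ[X₀,…,X_n] be the ideal generated by all homogeneous polynomials F with F(v_p) = 0 for every p ∈ X, and let i(X) be the least integer t such that the evaluation map from homogeneous polynomials of degree t to ℝ^X, F ↦ (F(v_p))_{p∈X}, is surjective. Then I(X) is generated by its homogeneous elements of degree at most α(X) := i(X) + 1. -/
noncomputable section

/-- The point `[1 : p₁ : ⋯ : pₙ]` of projective `n`-space, as a vector in `ℝ^{n+1}`. -/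
def projPt {n : ℕ} (p : Fin n → ℝ) : Fin (n + 1) → ℝ := Fin.cons 1 p

/-!
A homogeneous `F` of degree `t + 1 > i(X) + 1` vanishing on `X` is, by Euler's identity,
`∑ⱼ Xⱼ Gⱼ` with `Gⱼ` homogeneous of degree `t`. Choose `Hⱼ` homogeneous of degree `i(X)` with the
same values as `Gⱼ` on `X`. Then `W = ∑ⱼ Xⱼ Hⱼ` has the values of `F` on `X`, so it is a generator
of degree `i(X) + 1`, and since `X₀ = 1` on `X`, each `Gⱼ - X₀^(t - i(X)) Hⱼ` is homogeneous of
degree `t` and vanishes on `X`. Hence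
`F = ∑ⱼ Xⱼ (Gⱼ - X₀^(t - i(X)) Hⱼ) + X₀^(t - i(X)) W` lies in the ideal by induction on `t`.
-/

open MvPolynomial

namespace MvPolynomial

variable {σ K ι : Type*} [Fintype σ] [Field K]

theorem IsHomogeneous.exists_eq_sum_X_mul [CharZero K] {t : ℕ} {F : MvPolynomial σ K}
    (hF : F.IsHomogeneous (t + 1)) :
    ∃ G : σ → MvPolynomial σ K, (∀ j, (G j).IsHomogeneous t) ∧ F = ∑ j, X j * G j := by
  refine ⟨fun j => (t + 1 : K)⁻¹ • pderiv j F, fun j => ?_, ?_⟩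
  · exact (homogeneousSubmodule σ K t).smul_mem _ hF.pderiv
  · have hunit : (t + 1 : K) ≠ 0 := Nat.cast_add_one_ne_zero t
    simp_rw [mul_smul_comm, ← Finset.smul_sum, hF.sum_X_mul_pderiv, ← Nat.cast_smul_eq_nsmul K,
      smul_smul, Nat.cast_add_one, inv_mul_cancel₀ hunit, one_smul]

def homogeneousVanishingUpTo (pts : ι → σ → K) (d : ℕ) : Set (MvPolynomial σ K) :=
  {F | (∃ t ≤ d, F.IsHomogeneous t) ∧ ∀ i, eval (pts i) F = 0}

theorem IsHomogeneous.mem_span_homogeneousVanishingUpTo [CharZero K] {pts : ι → σ → K} {i₀ : σ}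
    (hpts : ∀ i, pts i i₀ = 1) {d : ℕ}
    (hinterp : ∀ G : MvPolynomial σ K, ∃ H : MvPolynomial σ K,
      H.IsHomogeneous d ∧ ∀ i, eval (pts i) H = eval (pts i) G)
    {t : ℕ} {F : MvPolynomial σ K} (hF : F.IsHomogeneous t) (hvan : ∀ i, eval (pts i) F = 0) :
    F ∈ Ideal.span (homogeneousVanishingUpTo pts (d + 1)) := by
  set J := Ideal.span (homogeneousVanishingUpTo pts (d + 1))
  induction t using Nat.strong_induction_on generalizing F with
  | _ t ih =>
  by_cases hle : t ≤ d + 1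
  · exact Ideal.subset_span ⟨⟨t, hle, hF⟩, hvan⟩
  obtain ⟨s, rfl⟩ : ∃ s, t = s + 1 := ⟨t - 1, by omega⟩
  obtain ⟨G, hG, rfl⟩ := hF.exists_eq_sum_X_mul
  choose H hH hHG using fun j => hinterp (G j)
  set m := s - d
  have hW : ∑ j, X j * H j ∈ J := by
    refine Ideal.subset_span ⟨⟨d + 1, le_rfl, ?_⟩, fun i => ?_⟩
    · exact IsHomogeneous.sum _ _ _ fun j _ => by
        simpa [add_comm] using (isHomogeneous_X K j).mul (hH j)
    · simpa only [map_sum, map_mul, eval_X, hHG] using hvan i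
  have hGH : ∀ j, G j - X i₀ ^ m * H j ∈ J := fun j => by
    refine ih s (by omega) ((hG j).sub ?_) fun i => ?_
    · simpa [show s = m + d by omega] using (isHomogeneous_X_pow i₀ m).mul (hH j)
    · simp [hpts, hHG]
  have hsplit : ∑ j, X j * G j = ∑ j, X j * (G j - X i₀ ^ m * H j) + X i₀ ^ m * ∑ j, X j * H j := by
    rw [Finset.mul_sum, ← Finset.sum_add_distrib]
    exact Finset.sum_congr rfl fun j _ => by ring
  rw [hsplit]
  exact add_mem (Ideal.sum_mem J fun j _ => J.mul_mem_left _ (hGH j)) (J.mul_mem_left _ hW)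

end MvPolynomial

theorem vanishing_ideal_generated_in_degree_interpolation_plus_one_general {n : ℕ}
    (X : Finset (Fin n → ℝ)) (iX : ℕ)
    (hsurj : ∀ v : {x // x ∈ X} → ℝ, ∃ F : MvPolynomial (Fin (n + 1)) ℝ,
      F.IsHomogeneous iX ∧
        ∀ p : {x // x ∈ X}, MvPolynomial.eval (projPt (p : Fin n → ℝ)) F = v p) :
    Ideal.span {F : MvPolynomial (Fin (n + 1)) ℝ |
        (∃ t, F.IsHomogeneous t) ∧ ∀ p ∈ X, MvPolynomial.eval (projPt p) F = 0} =
    Ideal.span {F : MvPolynomial (Fin (n + 1)) ℝ |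
        (∃ t ≤ iX + 1, F.IsHomogeneous t) ∧ ∀ p ∈ X, MvPolynomial.eval (projPt p) F = 0} := by
  let pts : X → Fin (n + 1) → ℝ := fun p => projPt p
  have hgens : {F : MvPolynomial (Fin (n + 1)) ℝ |
      (∃ t ≤ iX + 1, F.IsHomogeneous t) ∧ ∀ p ∈ X, MvPolynomial.eval (projPt p) F = 0} =
      homogeneousVanishingUpTo pts (iX + 1) := by
    simp [homogeneousVanishingUpTo, pts]
  refine le_antisymm ?_ (Ideal.span_mono fun F ⟨⟨t, _, hF⟩, hvan⟩ => ⟨⟨t, hF⟩, hvan⟩)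
  rw [Ideal.span_le, hgens]
  rintro F ⟨⟨t, hF⟩, hvan⟩
  exact hF.mem_span_homogeneousVanishingUpTo (i₀ := 0) (fun _ => rfl)
    (fun G => hsurj fun p => eval (pts p) G) fun p => hvan p p.2

/-- The homogeneous vanishing ideal `I(X)` of a finite set of points `X ⊆ ℝⁿ`
(embedded in projective space via `p ↦ [1 : p₁ : ⋯ : pₙ]`) is generated by its
homogeneous elements of degree at most `α(X) = i(X) + 1`, where `i(X)` is the least
`t` such that evaluation of degree-`t` homogeneous polynomials at the points of `X`
is surjective onto `ℝ^X` (the interpolation degree). -/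
theorem vanishing_ideal_generated_in_degree_interpolation_plus_one {n : ℕ}
    (X : Finset (Fin n → ℝ)) (hX : X.Nonempty) (iX : ℕ)
    (hsurj : ∀ v : {x // x ∈ X} → ℝ, ∃ F : MvPolynomial (Fin (n + 1)) ℝ,
      F.IsHomogeneous iX ∧
        ∀ p : {x // x ∈ X}, MvPolynomial.eval (projPt (p : Fin n → ℝ)) F = v p)
    (hleast : ∀ t : ℕ, (∀ v : {x // x ∈ X} → ℝ, ∃ F : MvPolynomial (Fin (n + 1)) ℝ,
      F.IsHomogeneous t ∧
        ∀ p : {x // x ∈ X}, MvPolynomial.eval (projPt (p : Fin n → ℝ)) F = v p) → iX ≤ t) :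
    Ideal.span {F : MvPolynomial (Fin (n + 1)) ℝ |
        (∃ t, F.IsHomogeneous t) ∧ ∀ p ∈ X, MvPolynomial.eval (projPt p) F = 0} =
    Ideal.span {F : MvPolynomial (Fin (n + 1)) ℝ |
        (∃ t ≤ iX + 1, F.IsHomogeneous t) ∧ ∀ p ∈ X, MvPolynomial.eval (projPt p) F = 0} :=
  vanishing_ideal_generated_in_degree_interpolation_plus_one_general X iX hsurj
end
end

section
/- Let K ⊆ ℝⁿ be a compact set and let X ⊆ K be a finite set. Suppose the vanishing ideal I(X) ⊆ ℝ[x₁,…,x_n] is generated by finitely many polynomials each of total degree at most g, and suppose every function X → ℝ is the restriction to X of a polynomial of total degree at most i. Let d ≥ max(2g, i) and let μ = Σ_{x∈X} c_x δ_x with all c_x ≥ 0. Then for every finite signed Borel measure ν on K satisfying ∫_K f dν = ∫_K f dμ for all polynomials f of total degree at most d, one has ‖ν‖_TV ≥ ‖μ‖_TV, and equality ‖ν‖_TV = ‖μ‖_TV holds only if ν = μ. In particular, μ is the unique minimizer of the total variation norm among all signed Borel measures on K with the same moments as μ up to degree d. -/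
open MeasureTheory

noncomputable section

/-- Integration of a real function against a finite signed Borel measure,
via the Jordan decomposition `ν = ν₊ − νneg`. -/
noncomputable def sint {α : Type*} [MeasurableSpace α] (ν : SignedMeasure α) (f : α → ℝ) : ℝ :=
  ∫ x, f x ∂ν.toJordanDecomposition.posPart - ∫ x, f x ∂ν.toJordanDecomposition.negPart

/-- The total variation norm `‖ν‖_TV = ν₊(K) + νneg(K)` of a finite signed measure. -/
noncomputable def tvNorm {α : Type*} [MeasurableSpace α] (ν : SignedMeasure α) : ℝ :=
  (ν.totalVariation Set.univ).toReal

/-!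
Testing `ν` against the constant `1` gives `ν₊(K) - νneg(K) = ∑ c_x = ‖μ‖_TV`, so
`‖ν‖_TV = ‖μ‖_TV + 2 νneg(K)`, and equality forces `ν = ν₊` to be a positive measure. Testing
against `s = ∑_{f ∈ G} f²`, of degree `≤ 2g ≤ d`, then gives `∫ s dν₊ = 0`; as `s ≥ 0` and the
zero set of `s` is the common zero set of the generators of `I(X)`, namely `X`, the measure
`ν₊` is concentrated on `X`. Its point masses are read off by testing against interpolants of
degree `≤ i ≤ d` of the indicators of the points of `X`.
-/

open scoped ENNReal NNReal

namespace MvPolynomial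

variable {σ R : Type*}

theorem exists_eval_eq_zero_on_finset_ne_zero [CommRing R] [IsDomain R] {s : Finset (σ → R)}
    {y : σ → R} (hy : y ∉ s) :
    ∃ h : MvPolynomial σ R, (∀ x ∈ s, eval x h = 0) ∧ eval y h ≠ 0 := by
  classical
  have hsep : ∀ x : s, ∃ j, (x : σ → R) j ≠ y j := fun x =>
    Function.ne_iff.mp (ne_of_mem_of_not_mem x.2 hy)
  choose j hj using hsep
  refine ⟨∏ x ∈ s.attach, (X (j x) - C ((x : σ → R) (j x))), fun x hx => ?_, ?_⟩
  · rw [map_prod]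
    exact Finset.prod_eq_zero (s.mem_attach ⟨x, hx⟩) (by simp)
  · simp only [map_prod, map_sub, eval_X, eval_C]
    exact Finset.prod_ne_zero_iff.mpr fun x _ => sub_ne_zero.mpr (hj x).symm

theorem mem_of_eval_generators_eq_zero [CommRing R] [IsDomain R] {s : Finset (σ → R)}
    {G : Set (MvPolynomial σ R)}
    (hG : ∀ f : MvPolynomial σ R, (∀ x ∈ s, eval x f = 0) → f ∈ Ideal.span G)
    {y : σ → R} (hy : ∀ f ∈ G, eval y f = 0) : y ∈ s := by
  by_contra hys
  obtain ⟨h, hs, hne⟩ := exists_eval_eq_zero_on_finset_ne_zero hys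
  have hspan : Ideal.span G ≤ RingHom.ker (eval y) := Ideal.span_le.mpr hy
  exact hne (hspan (hG h hs))

theorem totalDegree_sum_mul_self_le [CommSemiring R] {G : Finset (MvPolynomial σ R)} {g : ℕ}
    (hG : ∀ f ∈ G, f.totalDegree ≤ g) : (∑ f ∈ G, f * f).totalDegree ≤ 2 * g := by
  refine (totalDegree_finsetSum _ _).trans (Finset.sup_le fun f hf => ?_)
  have := hG f hf
  exact (totalDegree_mul f f).trans (by omega)

variable [CommRing R] [LinearOrder R] [IsStrictOrderedRing R]

theorem eval_sum_mul_self_nonneg (G : Finset (MvPolynomial σ R)) (y : σ → R) :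
    0 ≤ eval y (∑ f ∈ G, f * f) := by
  simp only [map_sum, map_mul]
  exact Finset.sum_nonneg fun f _ => mul_self_nonneg _

theorem eval_sum_mul_self_eq_zero_iff {G : Finset (MvPolynomial σ R)} {y : σ → R} :
    eval y (∑ f ∈ G, f * f) = 0 ↔ ∀ f ∈ G, eval y f = 0 := by
  simp only [map_sum, map_mul]
  rw [Finset.sum_eq_zero_iff_of_nonneg fun f _ => mul_self_nonneg _]
  simp only [mul_self_eq_zero]

end MvPolynomial

namespace MeasureTheory.Measure

variable {α : Type*} [MeasurableSpace α]

theorem toJordanDecomposition_toSignedMeasure (m : Measure α) [IsFiniteMeasure m] :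
    m.toSignedMeasure.toJordanDecomposition = ⟨m, 0, .zero_right⟩ := by
  refine SignedMeasure.toJordanDecomposition_eq ?_
  simp [JordanDecomposition.toSignedMeasure]

theorem totalVariation_toSignedMeasure (m : Measure α) [IsFiniteMeasure m] :
    m.toSignedMeasure.totalVariation = m := by
  simp [SignedMeasure.totalVariation, toJordanDecomposition_toSignedMeasure]

theorem tvNorm_toSignedMeasure (m : Measure α) [IsFiniteMeasure m] :
    tvNorm m.toSignedMeasure = m.real Set.univ := by
  rw [tvNorm, totalVariation_toSignedMeasure, measureReal_def]

theorem sint_toSignedMeasure (m : Measure α) [IsFiniteMeasure m] (f : α → ℝ) :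
    sint m.toSignedMeasure f = ∫ x, f x ∂m := by
  simp [sint, toJordanDecomposition_toSignedMeasure]

theorem toSignedMeasure_sum_smul_dirac {s : Finset α} {c : α → ℝ} (hc : ∀ x ∈ s, 0 ≤ c x) :
    ∑ x ∈ s, c x • (dirac x).toSignedMeasure
      = (∑ x ∈ s, (c x).toNNReal • dirac x).toSignedMeasure := by
  ext A hA
  rw [FunLike.coe_sum, Finset.sum_apply, toSignedMeasure_apply_measurable hA, measureReal_def,
    finsetSum_apply, ENNReal.toReal_sum fun x _ => measure_ne_top _ _]
  refine Finset.sum_congr rfl fun x hx => ?_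
  rw [_root_.smul_apply, toSignedMeasure_apply_measurable hA, smul_apply,
    ENNReal.toReal_smul, NNReal.smul_def, Real.coe_toNNReal _ (hc x hx), measureReal_def]

theorem restrict_eq_self_of_measure_compl_eq_zero {μ : Measure α} {s : Set α} (h : μ sᶜ = 0) :
    μ.restrict s = μ :=
  restrict_eq_self_of_ae_mem (mem_ae_iff.mpr h)

variable [MeasurableSingletonClass α]

theorem sum_smul_dirac_apply_compl (s : Finset α) (w : α → ℝ≥0) :
    (∑ x ∈ s, w x • dirac x) (↑s)ᶜ = 0 := by
  simp +contextual [finsetSum_apply]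

theorem sum_smul_dirac_apply_singleton {s : Finset α} (w : α → ℝ≥0) {x : α} (hx : x ∈ s) :
    (∑ y ∈ s, w y • dirac y) {x} = w x := by
  rw [finsetSum_apply, Finset.sum_eq_single_of_mem x hx fun y _ hyx => by simp [hyx]]
  simp

theorem ext_of_measure_compl_finset_eq_zero {μ ν : Measure α} {s : Finset α}
    (hμ : μ (↑s)ᶜ = 0) (hν : ν (↑s)ᶜ = 0) (h : ∀ x ∈ s, μ {x} = ν {x}) : μ = ν := by
  classical
  ext A hA
  rw [← restrict_eq_self_of_measure_compl_eq_zero hμ,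
    ← restrict_eq_self_of_measure_compl_eq_zero hν, restrict_apply hA, restrict_apply hA]
  have hA : A ∩ ↑s = ↑(s.filter (· ∈ A)) := by ext; simp [and_comm]
  rw [hA, ← sum_measure_singleton, ← sum_measure_singleton]
  exact Finset.sum_congr rfl fun x hx => h x (Finset.mem_filter.mp hx).1

end MeasureTheory.Measure

namespace MeasureTheory

variable {α E : Type*} [MeasurableSpace α] [NormedAddCommGroup E]

theorem integral_eq_sum_of_measure_compl_finset_eq_zero [NormedSpace ℝ E] [CompleteSpace E]
    [MeasurableSingletonClass α] {μ : Measure α} {s : Finset α} (hμ : μ (↑s)ᶜ = 0) {f : α → E}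
    (hf : Integrable f μ) : ∫ x, f x ∂μ = ∑ x ∈ s, μ.real {x} • f x := by
  have := setIntegral_finset s hf.integrableOn
  rwa [Measure.restrict_eq_self_of_measure_compl_eq_zero hμ] at this

theorem _root_.Continuous.integrable_of_measure_compl_eq_zero [TopologicalSpace α]
    [OpensMeasurableSpace α] [T2Space α] {μ : Measure α} [IsFiniteMeasureOnCompacts μ]
    {K : Set α} (hK : IsCompact K) (hμK : μ Kᶜ = 0) {f : α → E} (hf : Continuous f) :
    Integrable f μ := by
  simpa [IntegrableOn, Measure.restrict_eq_self_of_measure_compl_eq_zero hμK] using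
    hf.continuousOn.integrableOn_compact (μ := μ) hK

end MeasureTheory

namespace MeasureTheory.SignedMeasure

variable {α : Type*} [MeasurableSpace α] (ν : SignedMeasure α)

theorem tvNorm_eq_sint_one_add_two_mul_negPart :
    tvNorm ν = sint ν (fun _ => 1) + 2 * ν.toJordanDecomposition.negPart.real Set.univ := by
  simp only [tvNorm, sint, totalVariation, integral_const, smul_eq_mul, mul_one,
    Measure.add_apply, ENNReal.toReal_add (measure_ne_top _ _) (measure_ne_top _ _),
    measureReal_def]
  ring

theorem eq_toSignedMeasure_posPart_of_negPart_eq_zero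
    (h : ν.toJordanDecomposition.negPart = 0) :
    ν = ν.toJordanDecomposition.posPart.toSignedMeasure := by
  conv_lhs => rw [← ν.toSignedMeasure_toJordanDecomposition]
  simp [JordanDecomposition.toSignedMeasure, h]

end MeasureTheory.SignedMeasure

open MvPolynomial

theorem measure_compl_eq_zero_of_integral_eval_sum_mul_self_eq_zero {σ : Type*}
    {p : Measure (σ → ℝ)} {X : Finset (σ → ℝ)}
    {G : Finset (MvPolynomial σ ℝ)}
    (hG : ∀ f : MvPolynomial σ ℝ, (∀ x ∈ X, eval x f = 0) → f ∈ Ideal.span (G : Set _))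
    (hint : Integrable (fun y => eval y (∑ f ∈ G, f * f)) p)
    (h : ∫ y, eval y (∑ f ∈ G, f * f) ∂p = 0) : p (↑X)ᶜ = 0 := by
  have hae : ∀ᵐ y ∂p, eval y (∑ f ∈ G, f * f) = 0 :=
    (integral_eq_zero_iff_of_nonneg (eval_sum_mul_self_nonneg G) hint).mp h
  have hnull : p {y | ¬eval y (∑ f ∈ G, f * f) = 0} = 0 := ae_iff.mp hae
  refine measure_mono_null ?_ hnull
  intro y hyX hzero
  exact hyX (mem_of_eval_generators_eq_zero hG (eval_sum_mul_self_eq_zero_iff.mp hzero))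

theorem measureReal_singleton_eq_of_integral_eval_eq {σ : Type*} [Countable σ]
    {p : Measure (σ → ℝ)} {X : Finset (σ → ℝ)}
    {c : (σ → ℝ) → ℝ} {i : ℕ}
    (hinterp : ∀ v : (σ → ℝ) → ℝ, ∃ f : MvPolynomial σ ℝ,
      f.totalDegree ≤ i ∧ ∀ x ∈ X, eval x f = v x)
    (hpX : p (↑X)ᶜ = 0) (hint : ∀ f : MvPolynomial σ ℝ, Integrable (fun y => eval y f) p)
    (hmom : ∀ f : MvPolynomial σ ℝ, f.totalDegree ≤ i →
      ∫ y, eval y f ∂p = ∑ x ∈ X, c x * eval x f)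
    {x₀ : σ → ℝ} (hx₀ : x₀ ∈ X) : p.real {x₀} = c x₀ := by
  classical
  obtain ⟨e, he_deg, he⟩ := hinterp fun y => if y = x₀ then 1 else 0
  have hpick (w : (σ → ℝ) → ℝ) : ∑ x ∈ X, w x * eval x e = w x₀ := by
    simp [Finset.sum_congr rfl fun x hx => congrArg (w x * ·) (he x hx), hx₀]
  simpa [integral_eq_sum_of_measure_compl_finset_eq_zero hpX (hint e), hpick] using
    hmom e he_deg

theorem eq_sum_smul_dirac_of_integral_eval_eq {σ : Type*} [Countable σ] {K : Set (σ → ℝ)}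
    (hK : IsCompact K) {X : Finset (σ → ℝ)} {G : Finset (MvPolynomial σ ℝ)} {g i d : ℕ}
    (hGvan : ∀ f ∈ G, ∀ x ∈ X, eval x f = 0)
    (hGgen : ∀ f : MvPolynomial σ ℝ, (∀ x ∈ X, eval x f = 0) → f ∈ Ideal.span (G : Set _))
    (hGdeg : ∀ f ∈ G, f.totalDegree ≤ g)
    (hinterp : ∀ v : (σ → ℝ) → ℝ, ∃ f : MvPolynomial σ ℝ,
      f.totalDegree ≤ i ∧ ∀ x ∈ X, eval x f = v x)
    (hdg : 2 * g ≤ d) (hdi : i ≤ d) {c : (σ → ℝ) → ℝ} {p : Measure (σ → ℝ)} [IsFiniteMeasure p]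
    (hpK : p Kᶜ = 0)
    (hmom : ∀ f : MvPolynomial σ ℝ, f.totalDegree ≤ d →
      ∫ y, eval y f ∂p = ∑ x ∈ X, c x * eval x f) :
    p = ∑ x ∈ X, (c x).toNNReal • Measure.dirac x := by
  have hint (f : MvPolynomial σ ℝ) : Integrable (fun y => eval y f) p :=
    (continuous_eval f).integrable_of_measure_compl_eq_zero hK hpK
  have hpX : p (↑X)ᶜ = 0 := by
    refine measure_compl_eq_zero_of_integral_eval_sum_mul_self_eq_zero hGgen (hint _) ?_
    rw [hmom _ ((totalDegree_sum_mul_self_le hGdeg).trans hdg)]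
    refine Finset.sum_eq_zero fun x hx => ?_
    rw [eval_sum_mul_self_eq_zero_iff.mpr fun f hf => hGvan f hf x hx, mul_zero]
  refine Measure.ext_of_measure_compl_finset_eq_zero hpX (Measure.sum_smul_dirac_apply_compl _ _)
    fun x hx => ?_
  rw [Measure.sum_smul_dirac_apply_singleton _ hx, ← ofReal_measureReal,
    measureReal_singleton_eq_of_integral_eval_eq hinterp hpX hint
      (fun f hf => hmom f (hf.trans hdi)) hx]
  rfl

theorem tv_unique_minimizer_of_exact_moments_general {n : ℕ}
    (K : Set (Fin n → ℝ)) (hK : IsCompact K)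
    (X : Finset (Fin n → ℝ))
    (g i d : ℕ) (G : Finset (MvPolynomial (Fin n) ℝ))
    (hGvan : ∀ f ∈ G, ∀ x ∈ X, MvPolynomial.eval x f = 0)
    (hGgen : ∀ f : MvPolynomial (Fin n) ℝ, (∀ x ∈ X, MvPolynomial.eval x f = 0) →
      f ∈ Ideal.span (G : Set (MvPolynomial (Fin n) ℝ)))
    (hGdeg : ∀ f ∈ G, f.totalDegree ≤ g)
    (hinterp : ∀ v : (Fin n → ℝ) → ℝ, ∃ f : MvPolynomial (Fin n) ℝ,
      f.totalDegree ≤ i ∧ ∀ x ∈ X, MvPolynomial.eval x f = v x)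
    (hdg : 2 * g ≤ d) (hdi : i ≤ d)
    (c : (Fin n → ℝ) → ℝ) (hc : ∀ x, 0 ≤ c x) :
    ∀ ν : SignedMeasure (Fin n → ℝ), ν.totalVariation Kᶜ = 0 →
      (∀ f : MvPolynomial (Fin n) ℝ, f.totalDegree ≤ d →
        sint ν (fun x => MvPolynomial.eval x f) = ∑ x ∈ X, c x * MvPolynomial.eval x f) →
      tvNorm (∑ x ∈ X, c x • (Measure.dirac x).toSignedMeasure) ≤ tvNorm ν ∧
        (tvNorm ν = tvNorm (∑ x ∈ X, c x • (Measure.dirac x).toSignedMeasure) →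
          ν = ∑ x ∈ X, c x • (Measure.dirac x).toSignedMeasure) := by
  intro ν hνK hmom
  rw [Measure.toSignedMeasure_sum_smul_dirac fun x _ => hc x, Measure.tvNorm_toSignedMeasure]
  set m : Measure (Fin n → ℝ) := ∑ x ∈ X, (c x).toNNReal • Measure.dirac x
  set νneg := ν.toJordanDecomposition.negPart
  have hmass : sint ν (fun _ => 1) = m.real Set.univ := by
    simpa [m, measureReal_def, Measure.finsetSum_apply, ENNReal.toReal_sum, hc] using
      hmom 1 (by simp)
  rw [ν.tvNorm_eq_sint_one_add_two_mul_negPart, hmass]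
  refine ⟨by linarith [measureReal_nonneg (μ := νneg) (s := Set.univ)], fun heq => ?_⟩
  have hneg : νneg = 0 :=
    Measure.measure_univ_eq_zero.mp ((measureReal_eq_zero_iff ..).mp (by linarith))
  rw [ν.eq_toSignedMeasure_posPart_of_negPart_eq_zero hneg] at hνK hmom ⊢
  rw [Measure.totalVariation_toSignedMeasure] at hνK
  simp only [Measure.sint_toSignedMeasure] at hmom
  exact Measure.toSignedMeasure_congr
    (eq_sum_smul_dirac_of_integral_eval_eq hK hGvan hGgen hGdeg hinterp hdg hdi hνK hmom)

/-- **Exact recovery / uniqueness** (Theorem on `d(X) ≤ max(2g(X), i(X))`): let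
`K ⊆ ℝⁿ` be compact, `X ⊆ K` finite, suppose the vanishing ideal `I(X)` is generated
by polynomials of degree `≤ g` and every function on `X` is interpolated by a
polynomial of degree `≤ i`.  If `d ≥ max(2g, i)` and `μ = Σ_{x∈X} c_x δ_x` with
`c_x ≥ 0`, then every finite signed Borel measure `ν` on `K` with the same moments as
`μ` up to degree `d` satisfies `‖ν‖_TV ≥ ‖μ‖_TV`, with equality only if `ν = μ`. -/
theorem tv_unique_minimizer_of_exact_moments {n : ℕ}
    (K : Set (Fin n → ℝ)) (hK : IsCompact K)
    (X : Finset (Fin n → ℝ)) (hXK : ↑X ⊆ K)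
    (g i d : ℕ) (G : Finset (MvPolynomial (Fin n) ℝ))
    (hGvan : ∀ f ∈ G, ∀ x ∈ X, MvPolynomial.eval x f = 0)
    (hGgen : ∀ f : MvPolynomial (Fin n) ℝ, (∀ x ∈ X, MvPolynomial.eval x f = 0) →
      f ∈ Ideal.span (G : Set (MvPolynomial (Fin n) ℝ)))
    (hGdeg : ∀ f ∈ G, f.totalDegree ≤ g)
    (hinterp : ∀ v : (Fin n → ℝ) → ℝ, ∃ f : MvPolynomial (Fin n) ℝ,
      f.totalDegree ≤ i ∧ ∀ x ∈ X, MvPolynomial.eval x f = v x)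
    (hdg : 2 * g ≤ d) (hdi : i ≤ d)
    (c : (Fin n → ℝ) → ℝ) (hc : ∀ x, 0 ≤ c x) :
    ∀ ν : SignedMeasure (Fin n → ℝ), ν.totalVariation Kᶜ = 0 →
      (∀ f : MvPolynomial (Fin n) ℝ, f.totalDegree ≤ d →
        sint ν (fun x => MvPolynomial.eval x f) = ∑ x ∈ X, c x * MvPolynomial.eval x f) →
      tvNorm (∑ x ∈ X, c x • (Measure.dirac x).toSignedMeasure) ≤ tvNorm ν ∧
        (tvNorm ν = tvNorm (∑ x ∈ X, c x • (Measure.dirac x).toSignedMeasure) →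
          ν = ∑ x ∈ X, c x • (Measure.dirac x).toSignedMeasure) :=
  tv_unique_minimizer_of_exact_moments_general K hK X g i d G hGvan hGgen hGdeg hinterp hdg hdi c hc
end
end

section
/- Let K ⊆ ℝⁿ be a compact set and X ⊆ K a finite nonempty set whose vanishing ideal I(X) ⊆ ℝ[x₁,…,x_n] is generated by polynomials f₁,…,f_s each of total degree at most g. If d ≥ 2g, then X satisfies a quadratic isolation condition with respect to the polynomials of degree at most d: there exist constants C_a > 0 and C_b with 0 < C_b < 1 and a polynomial P of total degree at most d such that sup_{z∈K} |P(z)| ≤ 1, P(x) = 1 for every x ∈ X, and P(z) ≤ max(1 − C_a·d(z,X)², 1 − C_b) for every z ∈ K. -/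
/-!
With `Q = ∑ fᵢ²`, the witness is `P = 1 - ε Q` for a small `ε > 0`; everything rests on the
Łojasiewicz-type inequality `min (δ, c d(z,X)²) ≤ Q(z)` on `K`. Since the `fᵢ` generate `I(X)`,
Cauchy–Schwarz gives `q² ≤ M Q` on `K` for every `q ∈ I(X)`. Apply this to the defect
`1 - ∑ₓ eₓ` of a Lagrange basis `(eₓ)` of `X` and to the polynomials `(Xⱼ - xⱼ) eₓ`: where `Q`
is small the defect is small, so `eₓ(z) > 1/(2|X|)` for some `x ∈ X`, and then
`d(z,X)² ≤ d(z,x)² ≤ 4|X|² eₓ(z)² d(z,x)² ≲ Q(z)`.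
-/

noncomputable section

/-- Evaluation of a multivariate polynomial at a point of Euclidean space. -/
noncomputable def peval {n : ℕ} (f : MvPolynomial (Fin n) ℝ) (z : EuclideanSpace ℝ (Fin n)) : ℝ :=
  MvPolynomial.eval (fun j => z j) f

open MvPolynomial Finset

namespace MvPolynomial

theorem totalDegree_sum_sq_le {σ R ι : Type*} [CommSemiring R] (s : Finset ι)
    {f : ι → MvPolynomial σ R} {g : ℕ} (hf : ∀ i, (f i).totalDegree ≤ g) :
    (∑ i ∈ s, f i ^ 2).totalDegree ≤ 2 * g :=
  totalDegree_finsetSum_le fun i _ => (totalDegree_pow _ 2).trans (by gcongr; exact hf i)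

variable {σ R : Type*} [Field R]

theorem exists_eval_eq_one_eval_eq_zero {x y : σ → R} (h : x ≠ y) :
    ∃ p : MvPolynomial σ R, eval x p = 1 ∧ eval y p = 0 := by
  obtain ⟨j, hj⟩ := Function.ne_iff.mp h
  exact ⟨C (x j - y j)⁻¹ * (X j - C (y j)), by simp [sub_ne_zero.mpr hj], by simp⟩

theorem exists_eval_eq_one_forall_eval_eq_zero {x : σ → R} {S : Finset (σ → R)} (hx : x ∉ S) :
    ∃ p : MvPolynomial σ R, eval x p = 1 ∧ ∀ y ∈ S, eval y p = 0 := by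
  classical
  induction S using Finset.induction_on with
  | empty => exact ⟨1, by simp, by simp⟩
  | insert a S _ ih =>
    obtain ⟨p, hp1, hp0⟩ := ih fun h => hx (mem_insert_of_mem h)
    obtain ⟨q, hq1, hq0⟩ := exists_eval_eq_one_eval_eq_zero (x := x) (y := a)
      fun h => hx (mem_insert.2 (Or.inl h))
    refine ⟨p * q, by simp [hp1, hq1], ?_⟩
    simp only [forall_mem_insert, map_mul, hq0, mul_zero, true_and]
    exact fun y hy => by rw [hp0 y hy, zero_mul]

end MvPolynomial

theorem Finset.exists_one_div_two_mul_card_lt {ι : Type*} {s : Finset ι} {a : ι → ℝ}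
    (h : 1 / 2 < ∑ i ∈ s, a i) : ∃ i ∈ s, 1 / (2 * #s) < a i := by
  refine exists_lt_of_sum_lt (h.trans_le' ?_)
  rw [sum_const, nsmul_eq_mul]
  rcases (Nat.cast_nonneg #s : (0 : ℝ) ≤ #s).eq_or_lt with hs | hs
  · rw [← hs]; norm_num
  · rw [mul_one_div, mul_comm 2, ← div_div, div_self hs.ne']

theorem one_sub_mul_le_max {ε δ t q : ℝ} (hε : 0 ≤ ε) (h : min δ t ≤ q) :
    1 - ε * q ≤ max (1 - ε * t) (1 - ε * δ) := by
  rcases min_choice δ t with hδ | ht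
  · exact le_max_of_le_right (by rw [hδ] at h; nlinarith)
  · exact le_max_of_le_left (by rw [ht] at h; nlinarith)

theorem IsCompact.exists_pos_forall_mul_le_one {α : Type*} [TopologicalSpace α] {K : Set α}
    (hK : IsCompact K) {φ : α → ℝ} (hφ : ContinuousOn φ K) :
    ∃ ε > 0, ∀ z ∈ K, ε * φ z ≤ 1 := by
  obtain ⟨B, hB⟩ := hK.exists_bound_of_continuousOn hφ
  refine ⟨1 / (|B| + 1), by positivity, fun z hz => ?_⟩
  rw [one_div_mul_eq_div, div_le_one (by positivity)]
  linarith [le_abs_self (φ z), (hB z hz).trans (le_abs_self B), Real.norm_eq_abs (φ z)]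

section Euclidean

variable {n : ℕ}

section Eval

variable (p q : MvPolynomial (Fin n) ℝ) (z : EuclideanSpace ℝ (Fin n))

@[simp] theorem peval_C (a : ℝ) : peval (C a) z = a := eval_C a

@[simp] theorem peval_X (j : Fin n) : peval (X j) z = z j := eval_X j

@[simp] theorem peval_one : peval 1 z = 1 := map_one _

@[simp] theorem peval_sub : peval (p - q) z = peval p z - peval q z := map_sub _ p q

@[simp] theorem peval_mul : peval (p * q) z = peval p z * peval q z := map_mul _ p q

@[simp] theorem peval_pow (k : ℕ) : peval (p ^ k) z = peval p z ^ k := map_pow _ p k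

@[simp] theorem peval_sum {ι : Type*} (s : Finset ι) (f : ι → MvPolynomial (Fin n) ℝ) :
    peval (∑ i ∈ s, f i) z = ∑ i ∈ s, peval (f i) z := map_sum _ f s

end Eval

theorem continuous_peval (p : MvPolynomial (Fin n) ℝ) : Continuous (peval p) :=
  (continuous_eval p).comp (PiLp.continuous_ofLp 2 _)

theorem exists_peval_lagrange (X : Finset (EuclideanSpace ℝ (Fin n)))
    (x : EuclideanSpace ℝ (Fin n)) :
    ∃ e : MvPolynomial (Fin n) ℝ, peval e x = 1 ∧ ∀ y ∈ X, y ≠ x → peval e y = 0 := by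
  classical
  obtain ⟨e, he1, he0⟩ := exists_eval_eq_one_forall_eval_eq_zero
    (x := x.ofLp) (S := (X.erase x).image WithLp.ofLp) fun hx => by
      obtain ⟨y, hy, hyx⟩ := mem_image.1 hx
      exact ne_of_mem_erase hy (WithLp.ofLp_injective 2 hyx)
  exact ⟨e, he1, fun y hy hyx => he0 _ (mem_image_of_mem _ (mem_erase.2 ⟨hyx, hy⟩))⟩

theorem exists_sq_peval_le_mul_sum_sq {K : Set (EuclideanSpace ℝ (Fin n))} (hK : IsCompact K)
    {ι : Type*} [Fintype ι] {f : ι → MvPolynomial (Fin n) ℝ} {q : MvPolynomial (Fin n) ℝ}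
    (hq : q ∈ Ideal.span (Set.range f)) :
    ∃ M, 0 ≤ M ∧ ∀ z ∈ K, peval q z ^ 2 ≤ M * ∑ i, peval (f i) z ^ 2 := by
  obtain ⟨a, rfl⟩ := Ideal.mem_span_range_iff_exists_fun.mp hq
  obtain ⟨M, hM⟩ := hK.exists_bound_of_continuousOn
    (continuous_finsetSum univ fun i _ => (continuous_peval (a i)).pow 2).continuousOn
  refine ⟨|M|, abs_nonneg M, fun z hz => ?_⟩
  calc peval (∑ i, a i * f i) z ^ 2
      ≤ (∑ i, peval (a i) z ^ 2) * ∑ i, peval (f i) z ^ 2 := by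
        simpa using Finset.sum_mul_sq_le_sq_mul_sq _ _ _
    _ ≤ |M| * ∑ i, peval (f i) z ^ 2 := by
        gcongr
        exact (le_abs_self _).trans ((hM z hz).trans (le_abs_self M))

theorem exists_sum_sq_peval_le {K : Set (EuclideanSpace ℝ (Fin n))}
    {X : Finset (EuclideanSpace ℝ (Fin n))} {Φ : EuclideanSpace ℝ (Fin n) → ℝ}
    (hdom : ∀ q : MvPolynomial (Fin n) ℝ, (∀ x ∈ X, peval q x = 0) →
      ∃ M, 0 ≤ M ∧ ∀ z ∈ K, peval q z ^ 2 ≤ M * Φ z)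
    {ι : Type*} (s : Finset ι) (q : ι → MvPolynomial (Fin n) ℝ)
    (hq : ∀ k ∈ s, ∀ x ∈ X, peval (q k) x = 0) :
    ∃ M, 0 ≤ M ∧ ∀ z ∈ K, ∑ k ∈ s, peval (q k) z ^ 2 ≤ M * Φ z := by
  choose! M hM0 hM using fun k (hk : k ∈ s) => hdom (q k) (hq k hk)
  refine ⟨∑ k ∈ s, M k, sum_nonneg hM0, fun z hz => ?_⟩
  rw [sum_mul]
  exact sum_le_sum fun k hk => hM k hk z hz

theorem exists_sum_sq_peval_mul_dist_sq_le {K : Set (EuclideanSpace ℝ (Fin n))}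
    {X : Finset (EuclideanSpace ℝ (Fin n))} {Φ : EuclideanSpace ℝ (Fin n) → ℝ}
    (hdom : ∀ q : MvPolynomial (Fin n) ℝ, (∀ x ∈ X, peval q x = 0) →
      ∃ M, 0 ≤ M ∧ ∀ z ∈ K, peval q z ^ 2 ≤ M * Φ z)
    {e : EuclideanSpace ℝ (Fin n) → MvPolynomial (Fin n) ℝ}
    (he : ∀ x, ∀ y ∈ X, y ≠ x → peval (e x) y = 0) :
    ∃ M, 0 ≤ M ∧ ∀ z ∈ K, ∑ x ∈ X, peval (e x) z ^ 2 * dist z x ^ 2 ≤ M * Φ z := by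
  obtain ⟨M, hM0, hM⟩ := exists_sum_sq_peval_le hdom (X ×ˢ univ)
    (fun p => (MvPolynomial.X p.2 - C (p.1 p.2)) * e p.1) fun ⟨x, j⟩ _ y hy => by
      by_cases hyx : y = x
      · simp [hyx]
      · simp [he x y hy hyx]
  refine ⟨M, hM0, fun z hz => (le_of_eq ?_).trans (hM z hz)⟩
  rw [sum_product]
  refine sum_congr rfl fun x _ => ?_
  rw [PiLp.dist_sq_eq_of_L2, mul_sum]
  refine sum_congr rfl fun j _ => ?_
  simp only [peval_mul, peval_sub, peval_X, peval_C, Real.dist_eq, sq_abs]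
  ring

theorem exists_min_le_of_forall_sq_peval_le {K : Set (EuclideanSpace ℝ (Fin n))}
    {X : Finset (EuclideanSpace ℝ (Fin n))} (hX : X.Nonempty) {Φ : EuclideanSpace ℝ (Fin n) → ℝ}
    (hΦ : ∀ z ∈ K, 0 ≤ Φ z)
    (hdom : ∀ q : MvPolynomial (Fin n) ℝ, (∀ x ∈ X, peval q x = 0) →
      ∃ M, 0 ≤ M ∧ ∀ z ∈ K, peval q z ^ 2 ≤ M * Φ z) :
    ∃ δ c : ℝ, 0 < δ ∧ 0 < c ∧ ∀ z ∈ K, min δ (c * Metric.infDist z X ^ 2) ≤ Φ z := by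
  choose e he1 he0 using exists_peval_lagrange X
  obtain ⟨Mr, hMr0, hMr⟩ := hdom (1 - ∑ x ∈ X, e x) fun y hy => by
    rw [peval_sub, peval_one, peval_sum, sum_eq_single_of_mem y hy fun x _ hxy =>
      he0 x y hy hxy.symm, he1, sub_self]
  obtain ⟨Md, hMd0, hMd⟩ := exists_sum_sq_peval_mul_dist_sq_le hdom he0
  set N : ℝ := ((#X : ℕ) : ℝ)
  have hN : 0 < N := Nat.cast_pos.2 (card_pos.2 hX)
  refine ⟨1 / (4 * (Mr + 1)), 1 / (4 * N ^ 2 * (Md + 1)), by positivity, by positivity,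
    fun z hz => ?_⟩
  rcases le_or_gt (1 / (4 * (Mr + 1))) (Φ z) with hδ | hδ
  · exact (min_le_left _ _).trans hδ
  refine (min_le_right _ _).trans ?_
  have hsum : 1 / 2 < ∑ x ∈ X, peval (e x) z := by
    have hdefect := hMr z hz
    have : Mr * Φ z < 1 / 4 := calc
      Mr * Φ z ≤ Mr * (1 / (4 * (Mr + 1))) := by gcongr
      _ < 1 / 4 := by rw [mul_one_div, div_lt_iff₀ (by positivity)]; linarith
    simp only [peval_sub, peval_one, peval_sum] at hdefect
    nlinarith
  obtain ⟨x, hx, hex⟩ := exists_one_div_two_mul_card_lt hsum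
  have hex2 : 1 / (4 * N ^ 2) ≤ peval (e x) z ^ 2 := calc
    1 / (4 * N ^ 2) = (1 / (2 * N)) ^ 2 := by ring
    _ ≤ _ := pow_le_pow_left₀ (by positivity) hex.le 2
  have hinf : Metric.infDist z X ^ 2 ≤ dist z x ^ 2 :=
    pow_le_pow_left₀ Metric.infDist_nonneg (Metric.infDist_le_dist_of_mem (by simpa)) 2
  rw [div_mul_eq_mul_div, one_mul, div_le_iff₀ (by positivity)]
  calc Metric.infDist z X ^ 2 ≤ dist z x ^ 2 := hinf
    _ = 4 * N ^ 2 * (1 / (4 * N ^ 2) * dist z x ^ 2) := by field_simp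
    _ ≤ 4 * N ^ 2 * (peval (e x) z ^ 2 * dist z x ^ 2) := by gcongr
    _ ≤ 4 * N ^ 2 * (Md * Φ z) := by
      gcongr 4 * N ^ 2 * ?_
      exact (single_le_sum (fun y _ => by positivity) hx).trans (hMd z hz)
    _ ≤ Φ z * (4 * N ^ 2 * (Md + 1)) := by nlinarith [hΦ z hz]

end Euclidean

theorem quadratic_isolation_condition_general {n : ℕ}
    (K : Set (EuclideanSpace ℝ (Fin n))) (hK : IsCompact K)
    (X : Finset (EuclideanSpace ℝ (Fin n))) (hXne : X.Nonempty)
    (g : ℕ) (s : ℕ) (f : Fin s → MvPolynomial (Fin n) ℝ)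
    (hfdeg : ∀ i, (f i).totalDegree ≤ g)
    (hfvan : ∀ i, ∀ x ∈ X, peval (f i) x = 0)
    (hfgen : ∀ q : MvPolynomial (Fin n) ℝ, (∀ x ∈ X, peval q x = 0) →
      q ∈ Ideal.span (Set.range f))
    (d : ℕ) (hd : 2 * g ≤ d) :
    ∃ (Ca Cb : ℝ), 0 < Ca ∧ 0 < Cb ∧ Cb < 1 ∧
      ∃ P : MvPolynomial (Fin n) ℝ, P.totalDegree ≤ d ∧
        (∀ z ∈ K, |peval P z| ≤ 1) ∧
        (∀ x ∈ X, peval P x = 1) ∧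
        (∀ z ∈ K, peval P z ≤ max (1 - Ca * Metric.infDist z ↑X ^ 2) (1 - Cb)) := by
  set Q := ∑ i, f i ^ 2
  have hQ : ∀ z, peval Q z = ∑ i, peval (f i) z ^ 2 := fun z => by simp [Q]
  have hQ0 : ∀ z, 0 ≤ peval Q z := fun z => by rw [hQ]; positivity
  obtain ⟨δ, c, hδ, hc, hloj⟩ := exists_min_le_of_forall_sq_peval_le (K := K) hXne
    (fun z _ => hQ0 z) fun q hq => by
      simpa only [hQ] using exists_sq_peval_le_mul_sum_sq hK (hfgen q hq)
  obtain ⟨ε, hε, hεQ⟩ := hK.exists_pos_forall_mul_le_one (continuous_peval Q).continuousOn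
  have hP : ∀ z, peval (1 - C ε * Q) z = 1 - ε * peval Q z := fun z => by simp
  refine ⟨ε * c, min (ε * δ) (1 / 2), by positivity, by positivity, by norm_num, 1 - C ε * Q,
    ?_, fun z hz => ?_, fun x hx => ?_, fun z hz => ?_⟩
  · refine (totalDegree_sub _ _).trans (max_le (by simp) ((totalDegree_mul _ _).trans ?_))
    simpa using (totalDegree_sum_sq_le univ hfdeg).trans hd
  · rw [hP, abs_le]
    constructor <;> nlinarith [hεQ z hz, hQ0 z]
  · simp [hP, hQ, hfvan _ x hx]
  · rw [hP, mul_assoc]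
    exact (one_sub_mul_le_max hε.le (hloj z hz)).trans
      (max_le_max le_rfl (by gcongr; exact min_le_left _ _))

/-- **Quadratic isolation condition**: if `K ⊆ ℝⁿ` is compact, `X ⊆ K` is finite and
nonempty, its vanishing ideal is generated by polynomials `f₁,…,f_s` of degree `≤ g`,
and `d ≥ 2g`, then there are constants `C_a > 0` and `0 < C_b < 1` and a polynomial
`P` of degree `≤ d` with `sup_K |P| ≤ 1`, `P ≡ 1` on `X`, and
`P(z) ≤ max(1 − C_a d(z,X)², 1 − C_b)` for all `z ∈ K`. -/
theorem quadratic_isolation_condition {n : ℕ}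
    (K : Set (EuclideanSpace ℝ (Fin n))) (hK : IsCompact K)
    (X : Finset (EuclideanSpace ℝ (Fin n))) (hXne : X.Nonempty) (hXK : ↑X ⊆ K)
    (g : ℕ) (s : ℕ) (f : Fin s → MvPolynomial (Fin n) ℝ)
    (hfdeg : ∀ i, (f i).totalDegree ≤ g)
    (hfvan : ∀ i, ∀ x ∈ X, peval (f i) x = 0)
    (hfgen : ∀ q : MvPolynomial (Fin n) ℝ, (∀ x ∈ X, peval q x = 0) →
      q ∈ Ideal.span (Set.range f))
    (d : ℕ) (hd : 2 * g ≤ d) :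
    ∃ (Ca Cb : ℝ), 0 < Ca ∧ 0 < Cb ∧ Cb < 1 ∧
      ∃ P : MvPolynomial (Fin n) ℝ, P.totalDegree ≤ d ∧
        (∀ z ∈ K, |peval P z| ≤ 1) ∧
        (∀ x ∈ X, peval P x = 1) ∧
        (∀ z ∈ K, peval P z ≤ max (1 - Ca * Metric.infDist z ↑X ^ 2) (1 - Cb)) :=
  quadratic_isolation_condition_general K hK X hXne g s f hfdeg hfvan hfgen d hd
end
end

section
/- Let K ⊆ ℝⁿ be a compact set, τ a probability measure on K, and φ₁,…,φ_T continuous real-valued functions on K that are orthonormal in L²(τ). Let P = Σ_{i=1}^T a_i φ_i with sup_{z∈K} |P(z)| ≤ 1. Let μ be a finite positive Borel measure on K such that P = 1 on the support of μ (so that ∫_K P dμ = ‖μ‖_TV), let ε ∈ ℝ^T with ‖ε‖₂ ≤ δ, and set y_i := ∫_K φ_i dμ + ε_i. If Δ̂ is a finite signed Borel measure attaining the minimum of ‖ν‖_TV over all finite signed Borel measures ν on K with ‖(∫_K φ_i dν − y_i)_i‖₂ ≤ δ, then 0 ≤ ‖Δ̂‖_TV − ∫_K P dΔ̂ ≤ 2δ.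 -/
open MeasureTheory

noncomputable section

/-! Since `|P| ≤ 1` on `K`, `∫ P dΔ̂ ≤ ‖Δ̂‖_TV`. Since `μ` is itself feasible, minimality gives
`‖Δ̂‖_TV ≤ ‖μ‖_TV = ∫ P dμ`, so `‖Δ̂‖_TV − ∫ P dΔ̂ ≤ ∫ P d(μ − Δ̂) = ⟨a, m(μ) − m(Δ̂)⟩`, where
`m(ν) = (∫ φᵢ dν)ᵢ`. By orthonormality `‖a‖₂² = ∫ P² dτ ≤ 1`, and by Cauchy–Schwarz the pairing
is at most `‖m(μ) − y‖₂ + ‖y − m(Δ̂)‖₂ = ‖ε‖₂ + ‖y − m(Δ̂)‖₂ ≤ 2δ`. -/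

open Finset

namespace MeasureTheory.Measure

variable {α : Type*} [MeasurableSpace α] (μ : Measure α) [IsFiniteMeasure μ]

lemma toSignedMeasure_toJordanDecomposition :
    μ.toSignedMeasure.toJordanDecomposition = ⟨μ, 0, .zero_right⟩ := by
  apply JordanDecomposition.toSignedMeasure_injective
  rw [SignedMeasure.toSignedMeasure_toJordanDecomposition]
  simp [JordanDecomposition.toSignedMeasure, toSignedMeasure_zero]

lemma totalVariation_toSignedMeasure_s12 : μ.toSignedMeasure.totalVariation = μ := by
  simp [SignedMeasure.totalVariation, toSignedMeasure_toJordanDecomposition]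

end MeasureTheory.Measure

section SignedIntegral

variable {α : Type*} [MeasurableSpace α]

lemma tvNorm_toSignedMeasure (μ : Measure α) [IsFiniteMeasure μ] :
    tvNorm μ.toSignedMeasure = μ.real Set.univ := by
  rw [tvNorm, Measure.totalVariation_toSignedMeasure_s12, measureReal_def]

lemma sint_toSignedMeasure (μ : Measure α) [IsFiniteMeasure μ] (f : α → ℝ) :
    sint μ.toSignedMeasure f = ∫ x, f x ∂μ := by
  simp [sint, Measure.toSignedMeasure_toJordanDecomposition]

lemma tvNorm_eq_posPart_add_negPart (ν : SignedMeasure α) :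
    tvNorm ν = ν.toJordanDecomposition.posPart.real Set.univ
      + ν.toJordanDecomposition.negPart.real Set.univ := by
  simp only [tvNorm, SignedMeasure.totalVariation, measureReal_def, Measure.add_apply]
  exact ENNReal.toReal_add (measure_ne_top _ _) (measure_ne_top _ _)

lemma sint_le_tvNorm {ν : SignedMeasure α} {f : α → ℝ}
    (hf : ∀ᵐ x ∂ν.totalVariation, |f x| ≤ 1) : sint ν f ≤ tvNorm ν := by
  have bound : ∀ ρ : Measure α, [IsFiniteMeasure ρ] → ρ ≤ ν.totalVariation →
      |∫ x, f x ∂ρ| ≤ ρ.real Set.univ := fun ρ _ hρ ↦ by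
    have hfρ : ∀ᵐ x ∂ρ, ‖f x‖ ≤ 1 :=
      (hf.filter_mono (ae_mono hρ)).mono fun x hx ↦ by rwa [Real.norm_eq_abs]
    simpa only [Real.norm_eq_abs, one_mul] using norm_integral_le_of_norm_le_const hfρ
  have hpos := bound _ (Measure.le_add_right le_rfl)
  have hneg := bound _ (Measure.le_add_left le_rfl)
  rw [sint, tvNorm_eq_posPart_add_negPart]
  linarith [le_abs_self (∫ x, f x ∂ν.toJordanDecomposition.posPart),
    neg_abs_le (∫ x, f x ∂ν.toJordanDecomposition.negPart)]

lemma sint_sum_mul {ι : Type*} [Fintype ι] (ν : SignedMeasure α) (a : ι → ℝ) {φ : ι → α → ℝ}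
    (hφ : ∀ i, Integrable (φ i) ν.totalVariation) :
    sint ν (fun x ↦ ∑ i, a i * φ i x) = ∑ i, a i * sint ν (φ i) := by
  have expand : ∀ ρ : Measure α, ρ ≤ ν.totalVariation →
      ∫ x, ∑ i, a i * φ i x ∂ρ = ∑ i, a i * ∫ x, φ i x ∂ρ := fun ρ hρ ↦ by
    rw [integral_finsetSum _ fun i _ ↦ ((hφ i).mono_measure hρ).const_mul _]
    simp only [integral_const_mul]
  rw [sint, expand _ (Measure.le_add_right le_rfl), expand _ (Measure.le_add_left le_rfl),
    ← sum_sub_distrib]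
  simp only [sint, mul_sub]

end SignedIntegral

lemma ContinuousOn.integrable_of_measure_compl_eq_zero {X E : Type*} [TopologicalSpace X]
    [T2Space X] [MeasurableSpace X] [OpensMeasurableSpace X] [NormedAddCommGroup E]
    {K : Set X} {f : X → E} (hf : ContinuousOn f K) (hK : IsCompact K)
    {ρ : Measure X} [IsFiniteMeasure ρ] (hρ : ρ Kᶜ = 0) : Integrable f ρ := by
  rw [← Measure.restrict_eq_self_of_ae_mem (mem_ae_iff.2 hρ)]
  exact hf.integrableOn_compact hK

section Orthonormal

variable {α ι : Type*} [MeasurableSpace α] [Fintype ι] [DecidableEq ι]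
  {τ : Measure α} {φ : ι → α → ℝ}

lemma integral_sq_sum_mul_of_orthonormal
    (hint : ∀ i j, Integrable (fun z ↦ φ i z * φ j z) τ)
    (hON : ∀ i j, ∫ z, φ i z * φ j z ∂τ = if i = j then (1 : ℝ) else 0) (a : ι → ℝ) :
    ∫ z, (∑ i, a i * φ i z) ^ 2 ∂τ = ∑ i, a i ^ 2 := by
  have expand : ∀ z, (∑ i, a i * φ i z) ^ 2 = ∑ i, ∑ j, a i * a j * (φ i z * φ j z) := by
    intro z
    simp only [sq, sum_mul_sum]
    exact sum_congr rfl fun i _ ↦ sum_congr rfl fun j _ ↦ by ring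
  simp_rw [expand]
  rw [integral_finsetSum _ fun i _ ↦ integrable_finsetSum _ fun j _ ↦ (hint i j).const_mul _]
  simp_rw [integral_finsetSum _ fun j _ ↦ (hint _ j).const_mul _, integral_const_mul, hON]
  simp [sq]

lemma sum_sq_le_one_of_orthonormal [IsProbabilityMeasure τ]
    (hint : ∀ i j, Integrable (fun z ↦ φ i z * φ j z) τ)
    (hON : ∀ i j, ∫ z, φ i z * φ j z ∂τ = if i = j then (1 : ℝ) else 0) {a : ι → ℝ}
    (hbound : ∀ᵐ z ∂τ, |∑ i, a i * φ i z| ≤ 1) :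
    ∑ i, a i ^ 2 ≤ 1 := by
  rw [← integral_sq_sum_mul_of_orthonormal hint hON a]
  calc ∫ z, (∑ i, a i * φ i z) ^ 2 ∂τ ≤ ∫ _, (1 : ℝ) ∂τ :=
        integral_mono_of_nonneg (ae_of_all _ fun _ ↦ sq_nonneg _) (integrable_const 1)
          (hbound.mono fun _ hz ↦ (sq_le_one_iff_abs_le_one _).2 hz)
    _ = 1 := by simp

end Orthonormal

lemma abs_sum_mul_le_sqrt_of_sum_sq_le_one {ι : Type*} [Fintype ι] {a : ι → ℝ}
    (ha : ∑ i, a i ^ 2 ≤ 1) (c : ι → ℝ) : |∑ i, a i * c i| ≤ √(∑ i, c i ^ 2) :=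
  Real.abs_le_sqrt <| (sum_mul_sq_le_sq_mul_sq _ _ _).trans <|
    mul_le_of_le_one_left (sum_nonneg fun _ _ ↦ sq_nonneg _) ha

theorem tv_minus_certificate_integral_bound_general {n T : ℕ}
    (K : Set (Fin n → ℝ)) (hK : IsCompact K)
    (τ : Measure (Fin n → ℝ)) [IsProbabilityMeasure τ] (hτ : τ Kᶜ = 0)
    (φ : Fin T → (Fin n → ℝ) → ℝ) (hφc : ∀ i, ContinuousOn (φ i) K)
    (hON : ∀ i j, ∫ z, φ i z * φ j z ∂τ = if i = j then (1 : ℝ) else 0)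
    (a : Fin T → ℝ) (P : (Fin n → ℝ) → ℝ) (hP : P = fun z => ∑ i, a i * φ i z)
    (hPle : ∀ z ∈ K, |P z| ≤ 1)
    (μ : Measure (Fin n → ℝ)) [IsFiniteMeasure μ] (hμK : μ Kᶜ = 0)
    (hPtv : ∫ z, P z ∂μ = (μ Set.univ).toReal)
    (δ : ℝ) (ε : Fin T → ℝ) (hε : Real.sqrt (∑ i, ε i ^ 2) ≤ δ)
    (y : Fin T → ℝ) (hy : ∀ i, y i = (∫ z, φ i z ∂μ) + ε i)
    (Δ : SignedMeasure (Fin n → ℝ)) (hΔK : Δ.totalVariation Kᶜ = 0)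
    (hΔfeas : Real.sqrt (∑ i, (sint Δ (φ i) - y i) ^ 2) ≤ δ)
    (hΔmin : ∀ ν : SignedMeasure (Fin n → ℝ), ν.totalVariation Kᶜ = 0 →
      Real.sqrt (∑ i, (sint ν (φ i) - y i) ^ 2) ≤ δ → tvNorm Δ ≤ tvNorm ν) :
    0 ≤ tvNorm Δ - sint Δ P ∧ tvNorm Δ - sint Δ P ≤ 2 * δ := by
  have ha : ∑ i, a i ^ 2 ≤ 1 :=
    sum_sq_le_one_of_orthonormal
      (fun i j ↦ ((hφc i).mul (hφc j)).integrable_of_measure_compl_eq_zero hK hτ) hON <|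
      (ae_iff.2 hτ : ∀ᵐ z ∂τ, z ∈ K).mono fun z hz ↦ by simpa only [hP] using hPle z hz
  have hPΔ : sint Δ P = ∑ i, a i * sint Δ (φ i) :=
    hP ▸ sint_sum_mul Δ a fun i ↦ (hφc i).integrable_of_measure_compl_eq_zero hK hΔK
  have hμK' : μ.toSignedMeasure.totalVariation Kᶜ = 0 := by
    rwa [Measure.totalVariation_toSignedMeasure_s12]
  have hPμ : ∫ z, P z ∂μ = ∑ i, a i * ∫ z, φ i z ∂μ := by
    simpa only [hP, sint_toSignedMeasure] using sint_sum_mul μ.toSignedMeasure a fun i ↦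
      (hφc i).integrable_of_measure_compl_eq_zero hK hμK'
  have hμfeas : √(∑ i, (sint μ.toSignedMeasure (φ i) - y i) ^ 2) ≤ δ := by
    simpa [sint_toSignedMeasure, hy] using hε
  have hΔμ : tvNorm Δ ≤ ∫ z, P z ∂μ := by
    rw [hPtv, ← measureReal_def, ← tvNorm_toSignedMeasure]
    exact hΔmin _ hμK' hμfeas
  have hPΔle : sint Δ P ≤ tvNorm Δ :=
    sint_le_tvNorm <| (ae_iff.2 hΔK : ∀ᵐ z ∂Δ.totalVariation, z ∈ K).mono hPle
  refine ⟨sub_nonneg.2 hPΔle, ?_⟩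
  calc tvNorm Δ - sint Δ P ≤ ∫ z, P z ∂μ - sint Δ P := by linarith
    _ = -(∑ i, a i * (sint Δ (φ i) - y i) + ∑ i, a i * ε i) := by
      simp only [hPμ, hPΔ, hy, mul_add, mul_sub, sum_add_distrib, sum_sub_distrib]
      ring
    _ ≤ |∑ i, a i * (sint Δ (φ i) - y i)| + |∑ i, a i * ε i| :=
      (neg_le_abs _).trans (abs_add_le _ _)
    _ ≤ δ + δ := add_le_add ((abs_sum_mul_le_sqrt_of_sum_sq_le_one ha _).trans hΔfeas)
      ((abs_sum_mul_le_sqrt_of_sum_sq_le_one ha _).trans hε)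
    _ = 2 * δ := by ring

/-- **Key lemma, part (2)**: let `φ₁,…,φ_T` be continuous functions on a compact
`K ⊆ ℝⁿ`, orthonormal in `L²(τ)`, and `P = Σ aᵢ φᵢ` with `sup_K |P| ≤ 1`.  Let `μ` be
a finite positive Borel measure on `K` with `P = 1` on the support of `μ` (so
`∫ P dμ = ‖μ‖_TV`), and `yᵢ = ∫ φᵢ dμ + εᵢ` with `‖ε‖₂ ≤ δ`.  If `Δ̂` minimizes the
TV norm among feasible signed measures, then `0 ≤ ‖Δ̂‖_TV − ∫ P dΔ̂ ≤ 2δ`. -/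
theorem tv_minus_certificate_integral_bound {n T : ℕ}
    (K : Set (Fin n → ℝ)) (hK : IsCompact K)
    (τ : Measure (Fin n → ℝ)) [IsProbabilityMeasure τ] (hτ : τ Kᶜ = 0)
    (φ : Fin T → (Fin n → ℝ) → ℝ) (hφc : ∀ i, ContinuousOn (φ i) K)
    (hON : ∀ i j, ∫ z, φ i z * φ j z ∂τ = if i = j then (1 : ℝ) else 0)
    (a : Fin T → ℝ) (P : (Fin n → ℝ) → ℝ) (hP : P = fun z => ∑ i, a i * φ i z)
    (hPle : ∀ z ∈ K, |P z| ≤ 1)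
    (μ : Measure (Fin n → ℝ)) [IsFiniteMeasure μ] (hμK : μ Kᶜ = 0)
    (hPsupp : ∀ᵐ z ∂μ, P z = 1)
    (hPtv : ∫ z, P z ∂μ = (μ Set.univ).toReal)
    (δ : ℝ) (ε : Fin T → ℝ) (hε : Real.sqrt (∑ i, ε i ^ 2) ≤ δ)
    (y : Fin T → ℝ) (hy : ∀ i, y i = (∫ z, φ i z ∂μ) + ε i)
    (Δ : SignedMeasure (Fin n → ℝ)) (hΔK : Δ.totalVariation Kᶜ = 0)
    (hΔfeas : Real.sqrt (∑ i, (sint Δ (φ i) - y i) ^ 2) ≤ δ)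
    (hΔmin : ∀ ν : SignedMeasure (Fin n → ℝ), ν.totalVariation Kᶜ = 0 →
      Real.sqrt (∑ i, (sint ν (φ i) - y i) ^ 2) ≤ δ → tvNorm Δ ≤ tvNorm ν) :
    0 ≤ tvNorm Δ - sint Δ P ∧ tvNorm Δ - sint Δ P ≤ 2 * δ :=
  tv_minus_certificate_integral_bound_general K hK τ hτ φ hφc hON a P hP hPle μ hμK hPtv δ ε hε y hy
    Δ hΔK hΔfeas hΔmin
end
end

section
/- Let X ⊆ K ⊆ ℝⁿ with K compact and X finite and nonempty, and suppose the vanishing ideal I(X) ⊆ ℝ[x₁,…,x_n] equals the ideal generated by polynomials f₁,…,f_s. Set M_i := sup_{z∈K} |f_i(z)|, assume M_i > 0 for each i, and define h := Σ_{i=1}^s (f_i/M_i)². Then there exist positive constants η, D, D₁ such that: (1) for every z ∈ K with d(z,X) ≤ η one has h(z) ≥ D·d(z,X)²; and (2) for every z ∈ K with d(z,X) ≥ η there exists an index j ∈ {1,…,s} (possibly depending on z) with |f_j(z)/M_j| ≥ D₁. -/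
noncomputable section

open MvPolynomial Metric

lemma peval_continuous {n : ℕ} (p : MvPolynomial (Fin n) ℝ) : Continuous (peval p) := by
  have h1 : Continuous fun z : EuclideanSpace ℝ (Fin n) => (fun j => z j : Fin n → ℝ) :=
    continuous_pi fun j => (EuclideanSpace.proj j).continuous
  exact (MvPolynomial.continuous_eval (p := p)).comp h1

/-- the square-norm polynomial centered at `x`. -/
noncomputable def Psq {n : ℕ} (x : EuclideanSpace ℝ (Fin n)) : MvPolynomial (Fin n) ℝ :=
  ∑ j, (MvPolynomial.X j - MvPolynomial.C (x j)) ^ 2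

lemma peval_Psq {n : ℕ} (x z : EuclideanSpace ℝ (Fin n)) :
    peval (Psq x) z = ∑ j, (z j - x j) ^ 2 := by
  simp [Psq, peval]

lemma dist_sq_eq {n : ℕ} (z y : EuclideanSpace ℝ (Fin n)) :
    dist z y ^ 2 = ∑ j, (z j - y j) ^ 2 := by
  rw [EuclideanSpace.dist_eq, Real.sq_sqrt (by positivity)]
  simp [Real.dist_eq, sq_abs]

lemma peval_Psq_pos {n : ℕ} {x z : EuclideanSpace ℝ (Fin n)} (hxz : z ≠ x) :
    0 < peval (Psq x) z := by
  rw [peval_Psq, ← dist_sq_eq]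
  have : dist z x ≠ 0 := fun h => hxz (by rwa [dist_eq_zero] at h)
  positivity

lemma exists_nonzero_gen {n s : ℕ} (X : Finset (EuclideanSpace ℝ (Fin n)))
    (f : Fin s → MvPolynomial (Fin n) ℝ)
    (hfgen : ∀ q : MvPolynomial (Fin n) ℝ, (∀ x ∈ X, peval q x = 0) →
      q ∈ Ideal.span (Set.range f))
    {z : EuclideanSpace ℝ (Fin n)} (hz : z ∉ X) : ∃ i, peval (f i) z ≠ 0 := by
  set q : MvPolynomial (Fin n) ℝ := ∏ x ∈ X, Psq x with hq
  have hqvan : ∀ x ∈ X, peval q x = 0 := by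
    intro x hx
    have : peval q x = ∏ y ∈ X, peval (Psq y) x := by simp [hq, peval]
    rw [this]
    exact Finset.prod_eq_zero hx (by rw [peval_Psq]; simp)
  have hqz : peval q z ≠ 0 := by
    have : peval q z = ∏ y ∈ X, peval (Psq y) z := by simp [hq, peval]
    rw [this]
    have : 0 < ∏ y ∈ X, peval (Psq y) z :=
      Finset.prod_pos fun y hy => peval_Psq_pos (fun h => hz (h ▸ hy))
    exact ne_of_gt this
  obtain ⟨c, hc⟩ := Ideal.mem_span_range_iff_exists_fun.mp (hfgen q hqvan)
  by_contra h
  push_neg at h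
  apply hqz
  rw [← hc]
  have : peval (∑ i, c i * f i) z = ∑ i, peval (c i) z * peval (f i) z := by simp [peval]
  rw [this]
  exact Finset.sum_eq_zero fun i _ => by rw [h i, mul_zero]

set_option maxHeartbeats 1600000 in
/-- **Local coercivity of the squared generators**: let `X ⊆ K ⊆ ℝⁿ` with `K`
compact, `X` finite nonempty, and suppose the vanishing ideal `I(X)` equals the ideal
generated by `f₁,…,f_s`.  With `Mᵢ = sup_K |fᵢ|` (assumed positive) and
`h = Σ (fᵢ/Mᵢ)²`, there exist `η, D, D₁ > 0` such that (1) `h(z) ≥ D·d(z,X)²`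
whenever `z ∈ K` is within distance `η` of `X`, and (2) for `z ∈ K` at distance at
least `η` from `X` some generator satisfies `|f_j(z)/M_j| ≥ D₁`. -/
theorem generators_local_coercivity {n : ℕ}
    (K : Set (EuclideanSpace ℝ (Fin n))) (hK : IsCompact K)
    (X : Finset (EuclideanSpace ℝ (Fin n))) (hXne : X.Nonempty) (hXK : ↑X ⊆ K)
    (s : ℕ) (f : Fin s → MvPolynomial (Fin n) ℝ)
    (hfvan : ∀ i, ∀ x ∈ X, peval (f i) x = 0)
    (hfgen : ∀ q : MvPolynomial (Fin n) ℝ, (∀ x ∈ X, peval q x = 0) →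
      q ∈ Ideal.span (Set.range f))
    (M : Fin s → ℝ)
    (hM : ∀ i, IsLUB ((fun z => |peval (f i) z|) '' K) (M i))
    (hMpos : ∀ i, 0 < M i) :
    ∃ (η D D₁ : ℝ), 0 < η ∧ 0 < D ∧ 0 < D₁ ∧
      (∀ z ∈ K, Metric.infDist z ↑X ≤ η →
        D * Metric.infDist z ↑X ^ 2 ≤ ∑ i, (peval (f i) z / M i) ^ 2) ∧
      (∀ z ∈ K, η ≤ Metric.infDist z ↑X → ∃ j, D₁ ≤ |peval (f j) z / M j|) := by
  classical
  -- separation radius η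
  obtain ⟨η, hηpos, hsep⟩ : ∃ η : ℝ, 0 < η ∧ ∀ a ∈ X, ∀ b ∈ X, a ≠ b → 2 * η ≤ dist a b := by
    set T := (X ×ˢ X).filter (fun p => p.1 ≠ p.2) with hTdef
    by_cases hT2 : T.Nonempty
    · refine ⟨(T.inf' hT2 fun p => dist p.1 p.2) / 2, ?_, ?_⟩
      · have : 0 < T.inf' hT2 fun p => dist p.1 p.2 := by
          rw [Finset.lt_inf'_iff]
          rintro ⟨a, b⟩ hab
          rw [hTdef, Finset.mem_filter, Finset.mem_product] at hab
          exact dist_pos.mpr hab.2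
        linarith
      · intro a ha b hb hab
        have hmemT : (a, b) ∈ T := by
          rw [hTdef, Finset.mem_filter, Finset.mem_product]; exact ⟨⟨ha, hb⟩, hab⟩
        have := Finset.inf'_le (fun p => dist p.1 p.2) hmemT
        simpa using by linarith
    · refine ⟨1, one_pos, fun a ha b hb hab => absurd ?_ hT2⟩
      exact ⟨(a, b), by rw [hTdef, Finset.mem_filter, Finset.mem_product]; exact ⟨⟨ha, hb⟩, hab⟩⟩
  -- coefficient polynomials for the coordinate generators
  have hgspan : ∀ (x : X) (j : Fin n), ∃ cc : Fin s → MvPolynomial (Fin n) ℝ,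
      ∑ i, cc i * f i =
        (MvPolynomial.X j - MvPolynomial.C ((x : EuclideanSpace ℝ (Fin n)) j)) *
          ∏ y ∈ X.erase (x : EuclideanSpace ℝ (Fin n)), Psq y := by
    intro x j
    apply Ideal.mem_span_range_iff_exists_fun.mp
    apply hfgen
    intro w hw
    have hev : peval ((MvPolynomial.X j - MvPolynomial.C ((x : EuclideanSpace ℝ (Fin n)) j)) *
        ∏ y ∈ X.erase (x : EuclideanSpace ℝ (Fin n)), Psq y) w
        = (w j - (x : EuclideanSpace ℝ (Fin n)) j) *
            ∏ y ∈ X.erase (x : EuclideanSpace ℝ (Fin n)), peval (Psq y) w := by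
      simp [peval]
    rw [hev]
    by_cases hwx : w = (x : EuclideanSpace ℝ (Fin n))
    · rw [hwx]; simp
    · exact mul_eq_zero_of_right _
        (Finset.prod_eq_zero (Finset.mem_erase.mpr ⟨hwx, hw⟩) (by rw [peval_Psq]; simp))
  choose c hc using hgspan
  -- uniform bound A on the coefficients over K
  obtain ⟨x0, hx0⟩ := hXne
  have hKne : K.Nonempty := ⟨x0, hXK hx0⟩
  obtain ⟨A, hA1, hAbd⟩ : ∃ A : ℝ, 1 ≤ A ∧
      ∀ (x : X) (j : Fin n) (i : Fin s), ∀ w ∈ K, |peval (c x j i) w| ≤ A := by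
    have hGcont : Continuous (fun w => ∑ x : X, ∑ j, ∑ i, |peval (c x j i) w|) :=
      continuous_finset_sum _ fun x _ => continuous_finset_sum _ fun j _ =>
        continuous_finset_sum _ fun i _ => (peval_continuous _).abs
    obtain ⟨w0, hw0K, hw0'⟩ := hK.exists_isMaxOn hKne hGcont.continuousOn
    have hw0 : ∀ w ∈ K, (∑ x : X, ∑ j, ∑ i, |peval (c x j i) w|) ≤
        ∑ x : X, ∑ j, ∑ i, |peval (c x j i) w0| := fun w hw => isMaxOn_iff.mp hw0' w hw
    refine ⟨max 1 (∑ x : X, ∑ j, ∑ i, |peval (c x j i) w0|), le_max_left _ _, ?_⟩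
    intro x j i w hw
    have h1 : |peval (c x j i) w| ≤ ∑ x : X, ∑ j, ∑ i, |peval (c x j i) w| := by
      calc |peval (c x j i) w| ≤ ∑ i, |peval (c x j i) w| :=
            Finset.single_le_sum (f := fun i : Fin s => |peval (c x j i) w|)
              (fun _ _ => abs_nonneg _) (Finset.mem_univ i)
        _ ≤ ∑ j, ∑ i, |peval (c x j i) w| :=
            Finset.single_le_sum (f := fun j : Fin n => ∑ i, |peval (c x j i) w|)
              (fun _ _ => Finset.sum_nonneg fun _ _ => abs_nonneg _) (Finset.mem_univ j)
        _ ≤ ∑ x : X, ∑ j, ∑ i, |peval (c x j i) w| :=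
            Finset.single_le_sum (f := fun x : X => ∑ j, ∑ i, |peval (c x j i) w|)
              (fun _ _ => Finset.sum_nonneg fun _ _ => Finset.sum_nonneg fun _ _ => abs_nonneg _)
              (Finset.mem_univ x)
    exact h1.trans ((hw0 w hw).trans (le_max_right _ _))
  have hApos : (0 : ℝ) < A := lt_of_lt_of_le one_pos hA1
  -- bound on the M i
  obtain ⟨Mb, hMb1, hMble⟩ : ∃ Mb : ℝ, 1 ≤ Mb ∧ ∀ i, M i ≤ Mb := by
    refine ⟨1 + ∑ i, M i, ?_, ?_⟩
    · have : (0:ℝ) ≤ ∑ i, M i := Finset.sum_nonneg fun i _ => (hMpos i).le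
      linarith
    · intro i
      have h1 : M i ≤ ∑ i, M i :=
        Finset.single_le_sum (fun i _ => (hMpos i).le) (Finset.mem_univ i)
      linarith
  have hMbpos : (0 : ℝ) < Mb := lt_of_lt_of_le one_pos hMb1
  obtain ⟨c0, hc0def⟩ : ∃ c0 : ℝ, c0 = η ^ (2 * (X.card - 1)) := ⟨_, rfl⟩
  have hc0 : 0 < c0 := hc0def ▸ pow_pos hηpos _
  obtain ⟨P, hPdef⟩ : ∃ P : ℝ, P = ((n : ℝ) + 1) * A ^ 2 * ((s : ℝ) + 1) * Mb ^ 2 := ⟨_, rfl⟩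
  have hP : 0 < P := by rw [hPdef]; positivity
  obtain ⟨D, hDdef⟩ : ∃ D : ℝ, D = c0 ^ 2 / P := ⟨_, rfl⟩
  have hD : 0 < D := by rw [hDdef]; exact div_pos (pow_pos hc0 2) hP
  -- Part (1)
  have part1 : ∀ z ∈ K, Metric.infDist z ↑X ≤ η →
      D * Metric.infDist z ↑X ^ 2 ≤ ∑ i, (peval (f i) z / M i) ^ 2 := by
    intro z hz hdz
    obtain ⟨x, hxX', hdist⟩ :=
      X.finite_toSet.isCompact.exists_infDist_eq_dist (by exact ⟨x0, by exact_mod_cast hx0⟩) z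
    have hxX : x ∈ X := by exact_mod_cast hxX'
    have hzx : dist z x ≤ η := by rw [← hdist]; exact hdz
    have herase : ∀ y ∈ X.erase x, η ≤ dist z y := by
      intro y hy
      obtain ⟨hyx, hyX⟩ := Finset.mem_erase.mp hy
      have h2 := hsep y hyX x hxX hyx
      have h3 := dist_triangle y z x
      have h4 : dist z y = dist y z := dist_comm _ _
      rw [h4]; linarith
    have hprod : c0 ≤ ∏ y ∈ X.erase x, peval (Psq y) z := by
      have hcard : (X.erase x).card = X.card - 1 := Finset.card_erase_of_mem hxX
      calc c0 = (η ^ 2) ^ (X.card - 1) := by rw [hc0def, ← pow_mul]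
        _ = ∏ _y ∈ X.erase x, η ^ 2 := by rw [Finset.prod_const, hcard]
        _ ≤ ∏ y ∈ X.erase x, peval (Psq y) z := by
            refine Finset.prod_le_prod (fun _ _ => sq_nonneg η) (fun y hy => ?_)
            rw [peval_Psq, ← dist_sq_eq]
            exact pow_le_pow_left₀ hηpos.le (herase y hy) 2
    have hprodnn : 0 ≤ ∏ y ∈ X.erase x, peval (Psq y) z := le_trans hc0.le hprod
    obtain ⟨B, hBdef⟩ : ∃ B : ℝ, B = A * ∑ i, |peval (f i) z| := ⟨_, rfl⟩
    have hcoord : ∀ j : Fin n, c0 * |z j - x j| ≤ B := by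
      intro j
      have hg := hc ⟨x, hxX⟩ j
      have hgz : peval ((MvPolynomial.X j - MvPolynomial.C (x j)) *
          ∏ y ∈ X.erase x, Psq y) z = ∑ i, peval (c ⟨x, hxX⟩ j i) z * peval (f i) z := by
        rw [← hg]; simp [peval]
      have hlhs : peval ((MvPolynomial.X j - MvPolynomial.C (x j)) *
          ∏ y ∈ X.erase x, Psq y) z
          = (z j - x j) * ∏ y ∈ X.erase x, peval (Psq y) z := by simp [peval]
      have habs : |z j - x j| * ∏ y ∈ X.erase x, peval (Psq y) z ≤ B := by
        have heq : |z j - x j| * ∏ y ∈ X.erase x, peval (Psq y) z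
            = |(z j - x j) * ∏ y ∈ X.erase x, peval (Psq y) z| := by
          rw [abs_mul, abs_of_nonneg hprodnn]
        rw [heq, ← hlhs, hgz]
        calc |∑ i, peval (c ⟨x, hxX⟩ j i) z * peval (f i) z|
            ≤ ∑ i, |peval (c ⟨x, hxX⟩ j i) z * peval (f i) z| :=
              Finset.abs_sum_le_sum_abs _ _
          _ ≤ ∑ i, A * |peval (f i) z| := Finset.sum_le_sum fun i _ => by
              rw [abs_mul]
              exact mul_le_mul_of_nonneg_right (hAbd ⟨x, hxX⟩ j i z hz) (abs_nonneg _)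
          _ = B := by rw [hBdef, Finset.mul_sum]
      calc c0 * |z j - x j| ≤ (∏ y ∈ X.erase x, peval (Psq y) z) * |z j - x j| :=
            mul_le_mul_of_nonneg_right hprod (abs_nonneg _)
        _ = |z j - x j| * ∏ y ∈ X.erase x, peval (Psq y) z := mul_comm _ _
        _ ≤ B := habs
    have hBnn : 0 ≤ B := by
      rw [hBdef]
      have : (0:ℝ) ≤ ∑ i, |peval (f i) z| := Finset.sum_nonneg fun _ _ => abs_nonneg _
      positivity
    have hsum1 : c0 ^ 2 * dist z x ^ 2 ≤ (n : ℝ) * B ^ 2 := by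
      rw [dist_sq_eq, Finset.mul_sum]
      calc ∑ j, c0 ^ 2 * (z j - x j) ^ 2 = ∑ j, (c0 * |z j - x j|) ^ 2 := by
            simp [mul_pow, sq_abs]
        _ ≤ ∑ _j : Fin n, B ^ 2 :=
            Finset.sum_le_sum fun j _ => pow_le_pow_left₀ (mul_nonneg hc0.le (abs_nonneg _)) (hcoord j) 2
        _ = (n : ℝ) * B ^ 2 := by
            rw [Finset.sum_const, Finset.card_univ, Fintype.card_fin, nsmul_eq_mul]
    have hCS : (∑ i, |peval (f i) z|) ^ 2 ≤ (s : ℝ) * ∑ i, (peval (f i) z) ^ 2 := by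
      have h := sq_sum_le_card_mul_sum_sq (s := (Finset.univ : Finset (Fin s)))
        (f := fun i : Fin s => |peval (f i) z|)
      simpa [sq_abs] using h
    have hB2 : B ^ 2 ≤ A ^ 2 * ((s : ℝ) * ∑ i, (peval (f i) z) ^ 2) := by
      rw [hBdef, mul_pow]
      exact mul_le_mul_of_nonneg_left hCS (sq_nonneg A)
    obtain ⟨H, hHdef⟩ : ∃ H : ℝ, H = ∑ i, (peval (f i) z / M i) ^ 2 := ⟨_, rfl⟩
    have hHnn : 0 ≤ H := by rw [hHdef]; exact Finset.sum_nonneg fun _ _ => sq_nonneg _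
    have hMsum : ∑ i, (peval (f i) z) ^ 2 ≤ Mb ^ 2 * H := by
      rw [hHdef, Finset.mul_sum]
      refine Finset.sum_le_sum fun i _ => ?_
      have hMi := hMpos i
      have heq : (peval (f i) z) ^ 2 = M i ^ 2 * (peval (f i) z / M i) ^ 2 := by
        field_simp
      rw [heq]
      exact mul_le_mul_of_nonneg_right
        (pow_le_pow_left₀ hMi.le (hMble i) 2) (sq_nonneg _)
    have hstep : (s : ℝ) * ∑ i, (peval (f i) z) ^ 2 ≤ ((s : ℝ) + 1) * (Mb ^ 2 * H) := by
      calc (s : ℝ) * ∑ i, (peval (f i) z) ^ 2 ≤ (s : ℝ) * (Mb ^ 2 * H) :=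
            mul_le_mul_of_nonneg_left hMsum (Nat.cast_nonneg s)
        _ ≤ ((s : ℝ) + 1) * (Mb ^ 2 * H) :=
            mul_le_mul_of_nonneg_right (by linarith) (by positivity)
    have hchain : c0 ^ 2 * dist z x ^ 2 ≤ P * H := by
      calc c0 ^ 2 * dist z x ^ 2 ≤ (n : ℝ) * B ^ 2 := hsum1
        _ ≤ ((n : ℝ) + 1) * B ^ 2 :=
            mul_le_mul_of_nonneg_right (by linarith [Nat.cast_nonneg (α := ℝ) n]) (sq_nonneg B)
        _ ≤ ((n : ℝ) + 1) * (A ^ 2 * ((s : ℝ) * ∑ i, (peval (f i) z) ^ 2)) :=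
            mul_le_mul_of_nonneg_left hB2 (by positivity)
        _ ≤ ((n : ℝ) + 1) * (A ^ 2 * (((s : ℝ) + 1) * (Mb ^ 2 * H))) :=
            mul_le_mul_of_nonneg_left
              (mul_le_mul_of_nonneg_left hstep (sq_nonneg A)) (by positivity)
        _ = P * H := by rw [hPdef]; ring
    rw [hdist, hDdef, div_mul_eq_mul_div, div_le_iff₀ hP, ← hHdef]
    calc c0 ^ 2 * dist z x ^ 2 ≤ P * H := hchain
      _ = H * P := mul_comm _ _
  -- Part (2)
  set S2 : Set (EuclideanSpace ℝ (Fin n)) := K ∩ {z | η ≤ Metric.infDist z ↑X} with hS2def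
  have hS2c : IsCompact S2 :=
    hK.inter_right (isClosed_le continuous_const (continuous_infDist_pt _))
  have hhcont : Continuous fun z => ∑ i, (peval (f i) z / M i) ^ 2 :=
    continuous_finset_sum _ fun i _ =>
      (((peval_continuous (f i)).div_const (M i)).pow 2)
  have part2 : ∃ D₁ : ℝ, 0 < D₁ ∧
      ∀ z ∈ K, η ≤ Metric.infDist z ↑X → ∃ j, D₁ ≤ |peval (f j) z / M j| := by
    by_cases hS2ne : S2.Nonempty
    · obtain ⟨z1, hz1S, hz1min'⟩ := hS2c.exists_isMinOn hS2ne hhcont.continuousOn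
      have hz1min : ∀ z ∈ S2, (∑ i, (peval (f i) z1 / M i) ^ 2) ≤ ∑ i, (peval (f i) z / M i) ^ 2 := fun z hz => isMinOn_iff.mp hz1min' z hz
      have hz1X : z1 ∉ X := by
        intro hmem
        have h0 : Metric.infDist z1 ↑X = 0 :=
          Metric.infDist_zero_of_mem (by exact_mod_cast hmem)
        have := hz1S.2
        rw [Set.mem_setOf_eq, h0] at this
        linarith
      obtain ⟨i0, hi0⟩ := exists_nonzero_gen X f hfgen hz1X
      have hspos : 0 < s := i0.pos
      have hm : 0 < ∑ i, (peval (f i) z1 / M i) ^ 2 := by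
        have hterm : 0 < (peval (f i0) z1 / M i0) ^ 2 := by
          have : peval (f i0) z1 / M i0 ≠ 0 :=
            div_ne_zero hi0 (ne_of_gt (hMpos i0))
          positivity
        exact lt_of_lt_of_le hterm
          (Finset.single_le_sum (f := fun i : Fin s => (peval (f i) z1 / M i) ^ 2)
            (fun _ _ => sq_nonneg _) (Finset.mem_univ i0))
      set m : ℝ := ∑ i, (peval (f i) z1 / M i) ^ 2 with hmdef
      refine ⟨Real.sqrt (m / s), Real.sqrt_pos.mpr (by positivity), ?_⟩
      intro z hzK hzd
      have hzS : z ∈ S2 := ⟨hzK, hzd⟩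
      have hge : m ≤ ∑ i, (peval (f i) z / M i) ^ 2 := hz1min z hzS
      have hexists : ∃ j, m / s ≤ (peval (f j) z / M j) ^ 2 := by
        by_contra hcon
        push_neg at hcon
        have : ∑ i, (peval (f i) z / M i) ^ 2 < ∑ _i : Fin s, m / s :=
          Finset.sum_lt_sum_of_nonempty (Finset.univ_nonempty_iff.mpr
            ⟨i0⟩) (fun i _ => hcon i)
        rw [Finset.sum_const, Finset.card_univ, Fintype.card_fin, nsmul_eq_mul,
          mul_div_cancel₀ _ (by positivity : (s : ℝ) ≠ 0)] at this
        linarith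
      obtain ⟨j, hj⟩ := hexists
      refine ⟨j, ?_⟩
      calc Real.sqrt (m / s) ≤ Real.sqrt ((peval (f j) z / M j) ^ 2) :=
            Real.sqrt_le_sqrt hj
        _ = |peval (f j) z / M j| := Real.sqrt_sq_eq_abs _
    · refine ⟨1, one_pos, fun z hzK hzd => ?_⟩
      exact absurd (⟨z, ⟨hzK, hzd⟩⟩ : S2.Nonempty) hS2ne
  obtain ⟨D₁, hD₁, hpart2⟩ := part2
  exact ⟨η, D, D₁, hηpos, hD, hD₁, part1, hpart2⟩
end
end

section
/- For a positive even integer m define H_m(x) := (1/m) Σ_{k=0}^{m−1} (−1)^k T_{2k}(x), where T_j is the j-th Chebyshev polynomial of the first kind. Then: (1) H_m is a polynomial of degree exactly 2(m−1); (2) |H_m(x)| ≤ 1 for every x ∈ [−1,1], H_m(0) = 1, and if x ∈ [−1,1] satisfies H_m(x) = 1 then x = 0. -/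
noncomputable section

open Polynomial Real

/-- Degree and positive leading coefficient of Chebyshev T over ℝ. -/
lemma Tdeg : ∀ n : ℕ, (Polynomial.Chebyshev.T ℝ (n : ℤ)).degree = (n : ℕ) ∧
    0 < (Polynomial.Chebyshev.T ℝ (n : ℤ)).leadingCoeff := by
  intro n
  induction n using Nat.twoStepInduction with
  | zero => simp [Polynomial.Chebyshev.T_zero]
  | one => simp [Polynomial.Chebyshev.T_one]
  | more n ih ih1 =>
    have hrec : Polynomial.Chebyshev.T ℝ ((n + 2 : ℕ) : ℤ) =
        2 * X * Polynomial.Chebyshev.T ℝ ((n + 1 : ℕ) : ℤ) - Polynomial.Chebyshev.T ℝ (n : ℤ) := by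
      push_cast
      simpa using Polynomial.Chebyshev.T_add_two ℝ (n : ℤ)
    have hC2 : (2 : Polynomial ℝ) = Polynomial.C 2 := (map_ofNat Polynomial.C 2).symm
    have h2X : (2 * X : Polynomial ℝ).degree = 1 := by
      rw [hC2]; exact Polynomial.degree_C_mul_X two_ne_zero
    have hlc2 : (2 * X : Polynomial ℝ).leadingCoeff = 2 := by
      rw [hC2, Polynomial.leadingCoeff_mul, Polynomial.leadingCoeff_C,
        Polynomial.leadingCoeff_X, mul_one]
    obtain ⟨hd1, hl1⟩ := ih1
    obtain ⟨hd0, _⟩ := ih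
    have hdm : (2 * X * Polynomial.Chebyshev.T ℝ ((n + 1 : ℕ) : ℤ)).degree = ((n + 2 : ℕ) : WithBot ℕ) := by
      rw [Polynomial.degree_mul, h2X, hd1]
      exact_mod_cast (by omega : 1 + (n+1) = n+2)
    have hlt : (Polynomial.Chebyshev.T ℝ (n : ℤ)).degree <
        (2 * X * Polynomial.Chebyshev.T ℝ ((n + 1 : ℕ) : ℤ)).degree := by
      rw [hdm, hd0]
      exact_mod_cast Nat.lt_add_of_pos_right (by norm_num)
    constructor
    · rw [hrec, Polynomial.degree_sub_eq_left_of_degree_lt hlt, hdm]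
    · rw [hrec, Polynomial.leadingCoeff_sub_of_degree_lt hlt, Polynomial.leadingCoeff_mul, hlc2]
      positivity

/-- The helper polynomial `H_m(x) = (1/m) Σ_{k=0}^{m−1} (−1)^k T_{2k}(x)` built from
Chebyshev polynomials of the first kind. -/
noncomputable def Hpoly (m : ℕ) : Polynomial ℝ :=
  (m : ℝ)⁻¹ • ∑ k ∈ Finset.range m, ((-1 : ℝ)) ^ k • Polynomial.Chebyshev.T ℝ (2 * k)

lemma eval_sum_sin (m : ℕ) (u : ℝ) :
    (∑ k ∈ Finset.range m, ((-1 : ℝ)) ^ k • Polynomial.Chebyshev.T ℝ (2 * k)).eval (Real.sin u)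
      = ∑ k ∈ Finset.range m, Real.cos (2 * k * u) := by
  rw [Polynomial.eval_finset_sum]
  refine Finset.sum_congr rfl fun k _ => ?_
  rw [Polynomial.eval_smul, show Real.sin u = Real.cos (π / 2 - u) from (Real.cos_pi_div_two_sub u).symm,
    Polynomial.Chebyshev.T_real_cos]
  have harg : ((2 * (k : ℤ) : ℤ) : ℝ) * (π / 2 - u) = k * π - 2 * k * u := by push_cast; ring
  rw [harg, Real.cos_nat_mul_pi_sub]
  simp [smul_eq_mul, ← mul_assoc, ← mul_pow]

lemma telescope (m : ℕ) (u : ℝ) :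
    2 * Real.sin u * ∑ k ∈ Finset.range m, Real.cos (2 * k * u)
      = Real.sin ((2 * m - 1) * u) + Real.sin u := by
  induction m with
  | zero => simp [show ((2 * (0:ℕ) - 1 : ℝ)) * u = -u by push_cast; ring]
  | succ n ih =>
    rw [Finset.sum_range_succ, mul_add, ih]
    push_cast
    rw [show ((2 * ((n:ℝ)+1) - 1)) * u = 2 * n * u + u by ring,
      show ((2 * (n:ℝ) - 1)) * u = 2 * n * u - u by ring,
      Real.sin_add, Real.sin_sub]
    ring

lemma abs_sin_nat_mul_le (n : ℕ) (u : ℝ) : |Real.sin (n * u)| ≤ n * |Real.sin u| := by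
  induction n with
  | zero => simp
  | succ n ih =>
    push_cast
    rw [show ((n:ℝ) + 1) * u = n * u + u by ring, Real.sin_add]
    have h1 : |Real.sin (n*u) * Real.cos u| ≤ (n:ℝ) * |Real.sin u| := by
      rw [abs_mul]
      calc |Real.sin ((n:ℝ)*u)| * |Real.cos u| ≤ ((n:ℝ) * |Real.sin u|) * 1 :=
            mul_le_mul ih (Real.abs_cos_le_one u) (abs_nonneg _) (by positivity)
        _ = (n:ℝ) * |Real.sin u| := mul_one _
    have h2 : |Real.cos ((n:ℝ)*u) * Real.sin u| ≤ |Real.sin u| := by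
      rw [abs_mul]
      calc |Real.cos ((n:ℝ)*u)| * |Real.sin u| ≤ 1 * |Real.sin u| :=
            mul_le_mul_of_nonneg_right (Real.abs_cos_le_one _) (abs_nonneg _)
        _ = |Real.sin u| := one_mul _
    calc |Real.sin ((n:ℝ)*u) * Real.cos u + Real.cos ((n:ℝ)*u) * Real.sin u|
        ≤ |Real.sin ((n:ℝ)*u) * Real.cos u| + |Real.cos ((n:ℝ)*u) * Real.sin u| := abs_add_le _ _
      _ ≤ (n:ℝ) * |Real.sin u| + |Real.sin u| := add_le_add h1 h2
      _ = ((n:ℝ) + 1) * |Real.sin u| := by ring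

lemma abs_sin_nat_mul_lt (n : ℕ) (hn : 2 ≤ n) (u : ℝ) (hu : Real.sin u ≠ 0) :
    |Real.sin (n * u)| < n * |Real.sin u| := by
  have hsin : 0 < |Real.sin u| := abs_pos.mpr hu
  have hcos : |Real.cos u| < 1 := by
    rcases lt_or_eq_of_le (Real.abs_cos_le_one u) with h | h
    · exact h
    · exfalso
      have h2 := Real.sin_sq_add_cos_sq u
      have : Real.cos u ^ 2 = 1 := by
        have := sq_abs (Real.cos u)
        nlinarith
      have : Real.sin u ^ 2 = 0 := by nlinarith
      exact hu (pow_eq_zero_iff (n := 2) (by norm_num) |>.mp this)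
  obtain ⟨p, rfl⟩ : ∃ p, n = p + 1 := ⟨n - 1, by omega⟩
  have hp : 1 ≤ p := by omega
  have h1 : |Real.sin (p * u)| ≤ p * |Real.sin u| := abs_sin_nat_mul_le p u
  have hppos : (0:ℝ) < p := by exact_mod_cast hp
  push_cast
  rw [show ((p:ℝ) + 1) * u = p * u + u by ring, Real.sin_add]
  have hA : |Real.sin ((p:ℝ)*u)| * |Real.cos u| < (p:ℝ) * |Real.sin u| := by
    have hle : |Real.sin ((p:ℝ)*u)| * |Real.cos u| ≤ ((p:ℝ) * |Real.sin u|) * |Real.cos u| :=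
      mul_le_mul_of_nonneg_right h1 (abs_nonneg _)
    have hlt2 : ((p:ℝ) * |Real.sin u|) * |Real.cos u| < ((p:ℝ) * |Real.sin u|) * 1 :=
      mul_lt_mul_of_pos_left hcos (by positivity)
    nlinarith
  have hB : |Real.cos ((p:ℝ)*u)| * |Real.sin u| ≤ 1 * |Real.sin u| :=
    mul_le_mul_of_nonneg_right (Real.abs_cos_le_one _) (abs_nonneg _)
  calc |Real.sin ((p:ℝ)*u) * Real.cos u + Real.cos ((p:ℝ)*u) * Real.sin u|
      ≤ |Real.sin ((p:ℝ)*u) * Real.cos u| + |Real.cos ((p:ℝ)*u) * Real.sin u| := abs_add_le _ _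
    _ = |Real.sin ((p:ℝ)*u)| * |Real.cos u| + |Real.cos ((p:ℝ)*u)| * |Real.sin u| := by
        rw [abs_mul, abs_mul]
    _ < (p:ℝ) * |Real.sin u| + 1 * |Real.sin u| := add_lt_add_of_lt_of_le hA hB
    _ = ((p:ℝ) + 1) * |Real.sin u| := by ring

/-- For a positive even integer `m`: (1) `H_m` has degree exactly `2(m−1)`;
(2) `|H_m(x)| ≤ 1` on `[−1,1]`, `H_m(0) = 1`, and `0` is the only point of `[−1,1]`
where `H_m` attains the value `1`. -/
theorem Hpoly_degree_and_max (m : ℕ) (hm : Even m) (hm0 : 0 < m) :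
    (Hpoly m).degree = (2 * (m - 1) : ℕ) ∧
    (∀ x ∈ Set.Icc (-1 : ℝ) 1, |(Hpoly m).eval x| ≤ 1) ∧
    (Hpoly m).eval 0 = 1 ∧
    (∀ x ∈ Set.Icc (-1 : ℝ) 1, (Hpoly m).eval x = 1 → x = 0) := by
  have hmR : (m : ℝ) ≠ 0 := Nat.cast_ne_zero.mpr hm0.ne'
  have hm2 : 2 ≤ m := by rcases hm with ⟨c, rfl⟩; omega
  -- evaluation formula
  have heval : ∀ u : ℝ, (Hpoly m).eval (Real.sin u)
      = (m : ℝ)⁻¹ * ∑ k ∈ Finset.range m, Real.cos (2 * k * u) := by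
    intro u
    rw [Hpoly, Polynomial.eval_smul, smul_eq_mul, eval_sum_sin]
  have hx_repr : ∀ x ∈ Set.Icc (-1:ℝ) 1, Real.sin (Real.arcsin x) = x := fun x hx =>
    Real.sin_arcsin hx.1 hx.2
  refine ⟨?_, ?_, ?_, ?_⟩
  · -- degree
    obtain ⟨n, rfl⟩ : ∃ n, m = n + 1 := ⟨m - 1, by omega⟩
    have hdeg_term : ∀ k : ℕ, (((-1:ℝ)) ^ k • Polynomial.Chebyshev.T ℝ (2 * k)).degree
        = ((2 * k : ℕ) : WithBot ℕ) := by
      intro k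
      rw [Polynomial.smul_eq_C_mul, Polynomial.degree_C_mul (by
        simp [pow_ne_zero] : ((-1:ℝ))^k ≠ 0)]
      have := (Tdeg (2 * k)).1
      rw [show ((2 * (k:ℕ) : ℕ) : ℤ) = 2 * (k : ℤ) by push_cast; ring] at this
      exact this
    have hP : (∑ k ∈ Finset.range (n+1), ((-1:ℝ)) ^ k • Polynomial.Chebyshev.T ℝ (2 * k)).degree
        = ((2 * n : ℕ) : WithBot ℕ) := by
      rw [Finset.sum_range_succ]
      rcases Nat.eq_zero_or_pos n with rfl | hn
      · simpa using hdeg_term 0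
      · have htail : (∑ k ∈ Finset.range n, ((-1:ℝ)) ^ k • Polynomial.Chebyshev.T ℝ (2 * k)).degree
            < ((2 * n : ℕ) : WithBot ℕ) := by
          refine lt_of_le_of_lt (Polynomial.degree_sum_le _ _) ?_
          rw [Finset.sup_lt_iff (by exact_mod_cast WithBot.bot_lt_coe _)]
          intro k hk
          rw [hdeg_term k]
          have : 2 * k < 2 * n := by have := Finset.mem_range.mp hk; omega
          exact_mod_cast this
        rw [Polynomial.degree_add_eq_right_of_degree_lt (by rw [hdeg_term n]; exact htail),
          hdeg_term n]
    rw [Hpoly, Polynomial.smul_eq_C_mul, Polynomial.degree_C_mul (inv_ne_zero hmR), hP]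
    norm_num
  · -- bound
    intro x hx
    rw [← hx_repr x hx, heval]
    rw [abs_mul, abs_inv, Nat.abs_cast]
    rw [inv_mul_le_iff₀ (by exact_mod_cast hm0), mul_one]
    calc |∑ k ∈ Finset.range m, Real.cos (2 * k * Real.arcsin x)|
        ≤ ∑ k ∈ Finset.range m, |Real.cos (2 * k * Real.arcsin x)| :=
          Finset.abs_sum_le_sum_abs _ _
      _ ≤ ∑ _k ∈ Finset.range m, (1:ℝ) :=
          Finset.sum_le_sum fun k _ => Real.abs_cos_le_one _
      _ = m := by simp
  · -- eval at 0
    have := heval 0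
    simp only [Real.sin_zero] at this
    rw [this]
    simp [hmR]
  · -- uniqueness
    intro x hx hx1
    by_contra hx0
    set u := Real.arcsin x with hu
    have hsu : Real.sin u = x := hx_repr x hx
    have hsu0 : Real.sin u ≠ 0 := by rw [hsu]; exact hx0
    have hsum : ∑ k ∈ Finset.range m, Real.cos (2 * k * u) = m := by
      have h1 : (m : ℝ)⁻¹ * ∑ k ∈ Finset.range m, Real.cos (2 * k * u) = 1 := by
        rw [← heval, hsu, hx1]
      field_simp at h1
      linarith
    have htel := telescope m u
    rw [hsum] at htel
    -- sin((2m-1)u) + sin u = 2 sin(mu) cos((m-1)u)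
    have hsplit : Real.sin ((2 * m - 1) * u) + Real.sin u
        = 2 * Real.sin (m * u) * Real.cos (((m:ℝ) - 1) * u) := by
      have h1 : Real.sin ((2 * (m:ℝ) - 1) * u)
          = Real.sin ((m:ℝ)*u) * Real.cos (((m:ℝ)-1)*u)
            + Real.cos ((m:ℝ)*u) * Real.sin (((m:ℝ)-1)*u) := by
        rw [← Real.sin_add]; congr 1; ring
      have h2 : Real.sin u
          = Real.sin ((m:ℝ)*u) * Real.cos (((m:ℝ)-1)*u)
            - Real.cos ((m:ℝ)*u) * Real.sin (((m:ℝ)-1)*u) := by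
        rw [← Real.sin_sub]; congr 1; ring
      rw [h1, h2]; ring
    rw [hsplit] at htel
    -- take absolute values
    have habs := congrArg abs htel
    rw [abs_mul, abs_mul, abs_mul, abs_mul] at habs
    simp only [abs_two, Nat.abs_cast] at habs
    have hlt : |Real.sin ((m:ℝ) * u)| < m * |Real.sin u| := abs_sin_nat_mul_lt m hm2 u hsu0
    have hc1 : |Real.cos (((m:ℝ)-1)*u)| ≤ 1 := Real.abs_cos_le_one _
    have hge : (0:ℝ) ≤ |Real.sin ((m:ℝ) * u)| := abs_nonneg _
    have hcge : (0:ℝ) ≤ |Real.cos (((m:ℝ)-1)*u)| := abs_nonneg _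
    nlinarith [abs_pos.mpr hsu0]

end
end

section
/- For a positive even integer m ≥ 2 define H_m(x) := (1/m) Σ_{k=0}^{m−1} (−1)^k T_{2k}(x), where T_j is the j-th Chebyshev polynomial of the first kind. Then for every z ∈ [−π/2, π/2] with |z| ≥ 2/m one has |H_m(sin z)| ≤ 3/4. -/
noncomputable section

lemma sum_cos_id (z : ℝ) (n : ℕ) :
    2 * Real.sin z * ∑ k ∈ Finset.range n, Real.cos (2 * k * z)
      = Real.sin ((2 * n - 1) * z) + Real.sin z := by
  induction n with
  | zero => simp [show ((2:ℝ) * 0 - 1) * z = -z by ring]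
  | succ n ih =>
    rw [Finset.sum_range_succ, mul_add, ih]
    push_cast
    have h1 : ((2 * ((n:ℝ)+1) : ℝ) - 1) * z = 2 * n * z + z := by ring
    have h2 : ((2 * (n:ℝ) : ℝ) - 1) * z = 2 * n * z - z := by ring
    rw [h1, h2, Real.sin_add, Real.sin_sub]
    ring

lemma Hpoly_eval_sin (m : ℕ) (z : ℝ) :
    2 * Real.sin z * (Hpoly m).eval (Real.sin z)
      = (m : ℝ)⁻¹ * (Real.sin ((2 * m - 1) * z) + Real.sin z) := by
  have key : ∀ k : ℕ, ((-1:ℝ))^k * (Polynomial.Chebyshev.T ℝ (2 * k)).eval (Real.sin z)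
      = Real.cos (2 * k * z) := by
    intro k
    rw [← Real.cos_pi_div_two_sub z, Polynomial.Chebyshev.T_real_cos]
    have : ((2 * (k:ℕ) : ℤ) : ℝ) * (Real.pi / 2 - z) = -(2 * k * z) + k * Real.pi := by
      push_cast; ring
    rw [this, Real.cos_add_nat_mul_pi, Real.cos_neg, ← mul_assoc, ← mul_pow]
    norm_num
  have : (Hpoly m).eval (Real.sin z)
      = (m : ℝ)⁻¹ * ∑ k ∈ Finset.range m, Real.cos (2 * k * z) := by
    simp only [Hpoly, Polynomial.eval_smul, Polynomial.eval_finset_sum, smul_eq_mul]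
    congr 1
    exact Finset.sum_congr rfl fun k _ => key k
  rw [this, ← sum_cos_id z m]
  ring

/-- For an even integer `m ≥ 2` and `z ∈ [−π/2, π/2]` with `|z| ≥ 2/m`,
one has `|H_m(sin z)| ≤ 3/4`. -/
theorem Hpoly_small_away_from_zero (m : ℕ) (hm : Even m) (hm2 : 2 ≤ m) :
    ∀ z ∈ Set.Icc (-(Real.pi / 2)) (Real.pi / 2), 2 / (m : ℝ) ≤ |z| →
      |(Hpoly m).eval (Real.sin z)| ≤ 3 / 4 := by
  intro z hz hz2
  have hpi := Real.pi_pos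
  have hm0 : (0:ℝ) < m := by exact_mod_cast (by omega : 0 < m)
  have hm2' : (2:ℝ) ≤ m := by exact_mod_cast hm2
  -- lower bound on |sin z|
  have habs_le : |z| ≤ Real.pi / 2 := abs_le.mpr ⟨by linarith [hz.1], hz.2⟩
  have habs_eq : |Real.sin z| = Real.sin |z| := by
    rcases le_or_gt 0 z with h | h
    · rw [abs_of_nonneg h,
        abs_of_nonneg (Real.sin_nonneg_of_nonneg_of_le_pi h (by linarith [hz.2]))]
    · rw [abs_of_neg h, Real.sin_neg,
        abs_of_nonpos (Real.sin_nonpos_of_nonpos_of_neg_pi_le h.le (by linarith [hz.1]))]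
  have hsin_lb : 2 / Real.pi * |z| ≤ |Real.sin z| := by
    rw [habs_eq]
    exact Real.mul_le_sin (abs_nonneg z) habs_le
  have hzl : (2:ℝ) / m ≤ |z| := hz2
  have hsin_lb2 : 4 / (Real.pi * m) ≤ |Real.sin z| := by
    calc 4 / (Real.pi * m) = 2 / Real.pi * (2 / m) := by field_simp; ring
    _ ≤ 2 / Real.pi * |z| := by
        apply mul_le_mul_of_nonneg_left hzl; positivity
    _ ≤ |Real.sin z| := hsin_lb
  have hsin_pos : 0 < |Real.sin z| := lt_of_lt_of_le (by positivity) hsin_lb2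
  have key := Hpoly_eval_sin m z
  -- |H| = |sin((2m-1)z) + sin z| / (2 m |sin z|)
  have habs : 2 * |Real.sin z| * |(Hpoly m).eval (Real.sin z)|
      = (m : ℝ)⁻¹ * |Real.sin ((2 * m - 1) * z) + Real.sin z| := by
    have := congrArg abs key
    rwa [abs_mul, abs_mul, abs_of_nonneg (by norm_num : (0:ℝ) ≤ 2),
      abs_mul, abs_of_nonneg (by positivity : (0:ℝ) ≤ (m:ℝ)⁻¹)] at this
  have hnum : |Real.sin ((2 * m - 1) * z) + Real.sin z| ≤ 1 + |Real.sin z| := by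
    calc _ ≤ |Real.sin ((2 * m - 1) * z)| + |Real.sin z| := abs_add_le _ _
    _ ≤ 1 + |Real.sin z| := by linarith [Real.abs_sin_le_one ((2 * m - 1) * z)]
  -- bound
  have hH : |(Hpoly m).eval (Real.sin z)|
      ≤ (1 + |Real.sin z|) / (2 * m * |Real.sin z|) := by
    rw [le_div_iff₀ (by positivity)]
    calc |(Hpoly m).eval (Real.sin z)| * (2 * m * |Real.sin z|)
        = (m:ℝ) * (2 * |Real.sin z| * |(Hpoly m).eval (Real.sin z)|) := by ring
      _ = (m:ℝ) * ((m : ℝ)⁻¹ * |Real.sin ((2 * m - 1) * z) + Real.sin z|) := by rw [habs]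
      _ = |Real.sin ((2 * m - 1) * z) + Real.sin z| := by field_simp
      _ ≤ 1 + |Real.sin z| := hnum
  have h1 : (1 + |Real.sin z|) / (2 * m * |Real.sin z|)
      = 1 / (2 * m * |Real.sin z|) + 1 / (2 * m) := by
    field_simp
  have h2 : 1 / (2 * (m:ℝ) * |Real.sin z|) ≤ Real.pi / 8 := by
    rw [div_le_iff₀ (by positivity)]
    have : 2 * (m:ℝ) * (4 / (Real.pi * m)) ≤ 2 * m * |Real.sin z| := by
      apply mul_le_mul_of_nonneg_left hsin_lb2; positivity
    have heq : 2 * (m:ℝ) * (4 / (Real.pi * m)) = 8 / Real.pi := by field_simp; ring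
    rw [heq] at this
    calc (1:ℝ) = Real.pi / 8 * (8 / Real.pi) := by field_simp
    _ ≤ Real.pi / 8 * (2 * m * |Real.sin z|) := by
        apply mul_le_mul_of_nonneg_left this; positivity
  have h3 : 1 / (2 * (m:ℝ)) ≤ 1 / 4 := by
    rw [div_le_div_iff₀ (by positivity) (by norm_num)]; linarith
  have hpi4 : Real.pi ≤ 4 := by linarith [Real.pi_le_four]
  calc |(Hpoly m).eval (Real.sin z)| ≤ _ := hH
  _ = 1 / (2 * m * |Real.sin z|) + 1 / (2 * m) := h1
  _ ≤ Real.pi / 8 + 1 / 4 := add_le_add h2 h3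
  _ ≤ 3 / 4 := by linarith
end
end

section
/- For a positive even integer m ≥ 2 define H_m(x) := (1/m) Σ_{k=0}^{m−1} (−1)^k T_{2k}(x), where T_j is the j-th Chebyshev polynomial of the first kind. Then for every real z with |z| ≤ 2/m one has |H_m(sin z)| ≤ 1 − (m²/12)·sin²(z). Consequently, combining with the bound |H_m(sin z)| ≤ 3/4 for |z| ≥ 2/m, one has |H_m(x)| ≤ max(3/4, 1 − (m²/12)·x²) for every x ∈ [−1,1]. -/
/-!
On `x = sin z` the Chebyshev sum collapses, via `T_{2k}(sin z) = (-1)^k cos (2kz)`, to the mean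
of `cos (2kz)` over `k < m`, and `2 sin z · ∑ cos (2kz) = sin ((2m - 1) z) + sin z`.
For `0 ≤ z ≤ 2/m` the quartic Taylor bound `cos t ≤ 1 - t²/2 + t⁴/24`, summed with the closed forms
of `∑ k²` and `∑ k⁴`, gives the quadratic decay from above, and the Dirichlet-kernel identity bounds
the mean below by `-2/3`. For `2/m ≤ z ≤ π/2` Jordan's inequality gives `m sin z ≥ 1`, so the
same identity bounds the mean by `(1 + 1/m)/2 ≤ 3/4`. Evenness of `H_m` handles negative arguments.
-/

noncomputable section

open Real Finset Polynomial

theorem Real.cos_le_one_sub_sq_div_two_add_pow_four_div (x : ℝ) :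
    cos x ≤ 1 - x ^ 2 / 2 + x ^ 4 / 24 := by
  wlog hx : 0 ≤ x generalizing x
  · simpa [Even.neg_pow (by decide : Even 4)] using this (-x) (by linarith)
  let f (t : ℝ) : ℝ := 1 - t ^ 2 / 2 + t ^ 4 / 24 - cos t
  have hderiv (t : ℝ) : deriv f t = sin t - (t - t ^ 3 / 6) := by
    simp (disch := fun_prop) [f]
    ring
  have hmono : MonotoneOn f (Set.Ici 0) := by
    apply monotoneOn_of_deriv_nonneg (convex_Ici 0) (by fun_prop) (by fun_prop)
    grind [sin_ge_sub_cube, interior_Ici]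
  have h0 : f 0 ≤ f x := hmono (by simp) hx hx
  grind [cos_zero]

theorem sum_range_cast_pow_two (m : ℕ) :
    ∑ k ∈ range m, (k : ℝ) ^ 2 = m * (m - 1) * (2 * m - 1) / 6 := by
  induction m with
  | zero => simp
  | succ n ih => rw [sum_range_succ, ih]; push_cast; ring

theorem sum_range_cast_pow_four (m : ℕ) :
    ∑ k ∈ range m, (k : ℝ) ^ 4 = m * (m - 1) * (2 * m - 1) * (3 * m ^ 2 - 3 * m - 1) / 30 := by
  induction m with
  | zero => simp
  | succ n ih => rw [sum_range_succ, ih]; push_cast; ring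

theorem two_mul_sin_mul_sum_range_cos (m : ℕ) (z : ℝ) :
    2 * sin z * ∑ k ∈ range m, cos (2 * k * z) = sin ((2 * m - 1) * z) + sin z := by
  induction m with
  | zero => simp [neg_mul, sin_neg]
  | succ n ih =>
    rw [sum_range_succ, mul_add, ih]
    push_cast
    rw [show (2 * (n + 1 : ℝ) - 1) * z = 2 * n * z + z by ring,
      show (2 * (n : ℝ) - 1) * z = 2 * n * z - z by ring, sin_add, sin_sub]
    ring

theorem one_le_mul_sin_of_pi_div_two_le_mul {a w : ℝ} (hw₀ : 0 ≤ w) (hw : w ≤ π / 2)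
    (h : π / 2 ≤ a * w) : 1 ≤ a * sin w := by
  have ha : 0 ≤ a := by
    by_contra! ha
    nlinarith [pi_pos]
  calc 1 = 2 / π * (π / 2) := by field_simp
    _ ≤ 2 / π * (a * w) := by gcongr
    _ = a * (2 / π * w) := by ring
    _ ≤ a * sin w := by gcongr; exact mul_le_sin hw₀ hw

theorem Hpoly_eval_sin_s18 (m : ℕ) (z : ℝ) :
    (Hpoly m).eval (sin z) = (m : ℝ)⁻¹ * ∑ k ∈ range m, cos (2 * k * z) := by
  simp only [Hpoly, eval_smul, eval_finsetSum, smul_eq_mul, ← cos_pi_div_two_sub z,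
    Chebyshev.T_real_cos]
  congr 1
  refine sum_congr rfl fun k _ => ?_
  rw [show ((2 * k : ℤ) : ℝ) * (π / 2 - z) = k * π - 2 * k * z by push_cast; ring,
    cos_nat_mul_pi_sub, ← mul_assoc, ← mul_pow]
  norm_num

theorem Hpoly_eval_neg (m : ℕ) (x : ℝ) : (Hpoly m).eval (-x) = (Hpoly m).eval x := by
  simp [Hpoly, eval_finsetSum, Chebyshev.T_eval_neg, Int.negOnePow_two_mul]

theorem sum_range_cos_two_mul_le {m : ℕ} (hm : 2 ≤ m) {z : ℝ} (hz : |z| ≤ 2 / m) :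
    ∑ k ∈ range m, cos (2 * k * z) ≤ m - m ^ 3 * z ^ 2 / 12 := by
  have hm' : (2 : ℝ) ≤ m := by exact_mod_cast hm
  have hmz : m ^ 2 * z ^ 2 ≤ 4 := by
    rw [le_div_iff₀ (by positivity)] at hz
    have := pow_le_pow_left₀ (by positivity) hz 2
    rw [mul_pow, sq_abs] at this
    linarith
  calc ∑ k ∈ range m, cos (2 * k * z)
      ≤ ∑ k ∈ range m, (1 - 2 * z ^ 2 * (k : ℝ) ^ 2 + 2 / 3 * z ^ 4 * (k : ℝ) ^ 4) :=
        sum_le_sum fun k _ => (cos_le_one_sub_sq_div_two_add_pow_four_div _).trans_eq (by ring)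
    _ = m - 2 * z ^ 2 * (m * (m - 1) * (2 * m - 1) / 6)
          + 2 / 3 * z ^ 4 * (m * (m - 1) * (2 * m - 1) * (3 * m ^ 2 - 3 * m - 1) / 30) := by
        rw [sum_add_distrib, sum_sub_distrib, ← mul_sum, ← mul_sum, sum_range_cast_pow_two,
          sum_range_cast_pow_four]
        simp
    _ ≤ m - m ^ 3 * z ^ 2 / 12 := by
        nlinarith [mul_nonneg (mul_nonneg (sq_nonneg z) (sub_nonneg.2 hmz))
          (mul_nonneg (mul_nonneg (by linarith) (by linarith)) (by nlinarith) :
            (0 : ℝ) ≤ (m - 1) * (2 * m - 1) * (3 * m ^ 2 - 3 * m - 1)),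
          mul_nonneg (sq_nonneg z)
            (by nlinarith : (0 : ℝ) ≤ 9 * m ^ 4 + 60 * m ^ 3 - 100 * m ^ 2 + 16)]

theorem neg_two_thirds_mul_le_sum_range_cos_two_mul {m : ℕ} (hm : 2 ≤ m) {z : ℝ} (hz₀ : 0 ≤ z)
    (hz : z ≤ 2 / m) : -(2 / 3 * m) ≤ ∑ k ∈ range m, cos (2 * k * z) := by
  have hm' : (2 : ℝ) ≤ m := by exact_mod_cast hm
  have hmz : m * z ≤ 2 := by rwa [le_div_iff₀ (by positivity), mul_comm] at hz
  obtain rfl | hz₀ := hz₀.eq_or_lt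
  · simp only [mul_zero, cos_zero, sum_const, card_range, nsmul_eq_mul, mul_one]
    linarith
  have hsin : 0 < sin z := sin_pos_of_pos_of_lt_pi hz₀ (by nlinarith [pi_gt_three])
  refine le_of_mul_le_mul_left ?_ (by positivity : 0 < 2 * sin z)
  rw [two_mul_sin_mul_sum_range_cos]
  rcases le_or_gt ((2 * m - 1) * z) π with hπ | hπ
  · have : 0 ≤ sin ((2 * m - 1) * z) := sin_nonneg_of_nonneg_of_le_pi (by nlinarith) hπ
    nlinarith
  · -- Here `π < (2m - 1) z ≤ 4`, so `sin ((2m - 1) z) ≥ π - 4 > -1`, while `m sin z ≥ 1`.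
    have hmsin : 1 ≤ m * sin z :=
      one_le_mul_sin_of_pi_div_two_le_mul hz₀.le (by nlinarith [pi_gt_three]) (by nlinarith)
    have : π - 4 ≤ sin ((2 * m - 1) * z) := by
      have := sin_le (x := (2 * m - 1) * z - π) (by linarith)
      rw [sin_sub_pi] at this
      nlinarith
    nlinarith [pi_gt_three]

theorem abs_sum_range_cos_two_mul_le {m : ℕ} (hm : 2 ≤ m) {w : ℝ} (hw : 2 / m ≤ w)
    (hw' : w ≤ π / 2) : |∑ k ∈ range m, cos (2 * k * w)| ≤ 3 / 4 * m := by
  have hm' : (2 : ℝ) ≤ m := by exact_mod_cast hm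
  have hmw : 2 ≤ m * w := by rwa [div_le_iff₀ (by positivity), mul_comm] at hw
  have hw₀ : 0 < w := lt_of_lt_of_le (by positivity) hw
  have hsin : 0 < sin w := sin_pos_of_pos_of_lt_pi hw₀ (by linarith [pi_pos])
  have hmsin : 1 ≤ m * sin w :=
    one_le_mul_sin_of_pi_div_two_le_mul hw₀.le hw' (by linarith [pi_lt_four])
  refine le_of_mul_le_mul_left ?_ (by positivity : 0 < 2 * sin w)
  calc 2 * sin w * |∑ k ∈ range m, cos (2 * k * w)|
      = |sin ((2 * m - 1) * w) + sin w| := by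
        rw [← abs_of_pos (by positivity : 0 < 2 * sin w), ← abs_mul,
          two_mul_sin_mul_sum_range_cos]
    _ ≤ 1 + sin w := (abs_add_le _ _).trans (add_le_add (abs_sin_le_one _) (abs_of_pos hsin).le)
    _ ≤ 2 * sin w * (3 / 4 * m) := by nlinarith

theorem abs_Hpoly_eval_sin_le {m : ℕ} (hm : 2 ≤ m) {z : ℝ} (hz₀ : 0 ≤ z) (hz : z ≤ 2 / m) :
    |(Hpoly m).eval (sin z)| ≤ 1 - m ^ 2 / 12 * sin z ^ 2 := by
  have hm' : (2 : ℝ) ≤ m := by exact_mod_cast hm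
  have hmz : m * z ≤ 2 := by rwa [le_div_iff₀ (by positivity), mul_comm] at hz
  have hsin : m ^ 2 * sin z ^ 2 ≤ 4 := by
    nlinarith [mul_le_mul_of_nonneg_left (sin_sq_le_sq (x := z)) (sq_nonneg (m : ℝ)),
      mul_self_le_mul_self (by positivity) hmz]
  rw [Hpoly_eval_sin_s18, abs_mul, abs_inv, Nat.abs_cast, inv_mul_le_iff₀ (by positivity), abs_le]
  have hupper := sum_range_cos_two_mul_le hm (by rwa [abs_of_nonneg hz₀])
  have hlower := neg_two_thirds_mul_le_sum_range_cos_two_mul hm hz₀ hz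
  constructor <;> nlinarith [mul_le_mul_of_nonneg_left hsin (by positivity : (0 : ℝ) ≤ m),
    mul_le_mul_of_nonneg_left (sin_sq_le_sq (x := z)) (by positivity : (0 : ℝ) ≤ m ^ 3)]

theorem abs_Hpoly_eval_sin_le_three_quarters {m : ℕ} (hm : 2 ≤ m) {w : ℝ} (hw : 2 / m ≤ w)
    (hw' : w ≤ π / 2) : |(Hpoly m).eval (sin w)| ≤ 3 / 4 := by
  rw [Hpoly_eval_sin_s18, abs_mul, abs_inv, Nat.abs_cast, inv_mul_le_iff₀ (by positivity), mul_comm]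
  exact abs_sum_range_cos_two_mul_le hm hw hw'

theorem Hpoly_quadratic_decay_general (m : ℕ) (hm2 : 2 ≤ m) :
    (∀ z : ℝ, |z| ≤ 2 / (m : ℝ) →
      |(Hpoly m).eval (Real.sin z)| ≤ 1 - (m : ℝ) ^ 2 / 12 * Real.sin z ^ 2) ∧
    (∀ x ∈ Set.Icc (-1 : ℝ) 1,
      |(Hpoly m).eval x| ≤ max (3 / 4) (1 - (m : ℝ) ^ 2 / 12 * x ^ 2)) := by
  refine ⟨fun z hz => ?_, fun x hx => ?_⟩
  · wlog hz₀ : 0 ≤ z generalizing z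
    · simpa [Hpoly_eval_neg] using this (-z) (by rwa [abs_neg]) (by linarith)
    exact abs_Hpoly_eval_sin_le hm2 hz₀ ((le_abs_self z).trans hz)
  · wlog hx₀ : 0 ≤ x generalizing x
    · simpa [Hpoly_eval_neg] using
        this (-x) ⟨by linarith [hx.2], by linarith [hx.1]⟩ (by linarith)
    obtain ⟨z, ⟨hz₀, hzπ⟩, rfl⟩ : ∃ z ∈ Set.Icc 0 (π / 2), sin z = x :=
      ⟨arcsin x, ⟨arcsin_nonneg.2 hx₀, arcsin_le_pi_div_two x⟩, sin_arcsin hx.1 hx.2⟩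
    rcases le_or_gt z (2 / m) with hz | hz
    · exact (abs_Hpoly_eval_sin_le hm2 hz₀ hz).trans (le_max_right _ _)
    · exact (abs_Hpoly_eval_sin_le_three_quarters hm2 hz.le hzπ).trans (le_max_left _ _)

/-- For an even integer `m ≥ 2`: (a) `|H_m(sin z)| ≤ 1 − (m²/12) sin² z` whenever
`|z| ≤ 2/m`; (b) consequently `|H_m(x)| ≤ max(3/4, 1 − (m²/12) x²)` on `[−1,1]`. -/
theorem Hpoly_quadratic_decay (m : ℕ) (hm : Even m) (hm2 : 2 ≤ m) :
    (∀ z : ℝ, |z| ≤ 2 / (m : ℝ) →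
      |(Hpoly m).eval (Real.sin z)| ≤ 1 - (m : ℝ) ^ 2 / 12 * Real.sin z ^ 2) ∧
    (∀ x ∈ Set.Icc (-1 : ℝ) 1,
      |(Hpoly m).eval x| ≤ max (3 / 4) (1 - (m : ℝ) ^ 2 / 12 * x ^ 2)) :=
  Hpoly_quadratic_decay_general m hm2
end
end

section
/- For a positive even integer m define H_m(x) := (1/m) Σ_{k=0}^{m−1} (−1)^k T_{2k}(x), where T_j is the j-th Chebyshev polynomial of the first kind. Then for every x ∈ [−1,1] one has H_m(x) ≥ 1 − (π²/2)·m²·x². -/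
noncomputable section

/-- For a positive even integer `m` and every `x ∈ [−1,1]`:
`H_m(x) ≥ 1 − (π²/2) m² x²`. -/
theorem Hpoly_lower_bound (m : ℕ) (hm : Even m) (hm0 : 0 < m) :
    ∀ x ∈ Set.Icc (-1 : ℝ) 1,
      1 - Real.pi ^ 2 / 2 * (m : ℝ) ^ 2 * x ^ 2 ≤ (Hpoly m).eval x := by
  intro x hx
  obtain ⟨hx1, hx2⟩ := hx
  set t := Real.arcsin x with ht
  have hxt : Real.sin t = x := Real.sin_arcsin hx1 hx2
  have ht1 : -(Real.pi / 2) ≤ t := Real.neg_pi_div_two_le_arcsin x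
  have ht2 : t ≤ Real.pi / 2 := Real.arcsin_le_pi_div_two x
  have hpi : (0 : ℝ) < Real.pi := Real.pi_pos
  have hcosx : x = Real.cos (Real.pi / 2 - t) := by
    rw [Real.cos_pi_div_two_sub, hxt]
  -- evaluate the polynomial
  have heval : (Hpoly m).eval x
      = (m : ℝ)⁻¹ * ∑ k ∈ Finset.range m, Real.cos (2 * k * t) := by
    simp only [Hpoly, Polynomial.eval_smul, Polynomial.eval_finset_sum, smul_eq_mul]
    congr 1
    refine Finset.sum_congr rfl fun k _ => ?_
    rw [hcosx, Polynomial.Chebyshev.T_real_cos]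
    have h1 : ((2 * (k : ℕ) : ℤ) : ℝ) * (Real.pi / 2 - t) = k * Real.pi - 2 * k * t := by
      push_cast
      ring
    rw [h1, Real.cos_nat_mul_pi_sub, ← mul_assoc, ← pow_add, ← two_mul, pow_mul,
      neg_one_sq, one_pow, one_mul]
  rw [heval]
  -- bound each cosine from below
  have hterm : ∀ k ∈ Finset.range m, (1 : ℝ) - 2 * (m : ℝ) ^ 2 * t ^ 2
      ≤ Real.cos (2 * k * t) := by
    intro k hk
    have hkm : (k : ℝ) ≤ (m : ℝ) := by
      exact_mod_cast (Finset.mem_range.mp hk).le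
    have hk0 : (0 : ℝ) ≤ (k : ℝ) := Nat.cast_nonneg k
    have hc := Real.one_sub_sq_div_two_le_cos (x := 2 * k * t)
    have hk2 : (k : ℝ) ^ 2 * t ^ 2 ≤ (m : ℝ) ^ 2 * t ^ 2 := by
      have : (k : ℝ) ^ 2 ≤ (m : ℝ) ^ 2 := by nlinarith
      nlinarith [sq_nonneg t]
    nlinarith [hc, hk2]
  have hsum : (m : ℝ) * (1 - 2 * (m : ℝ) ^ 2 * t ^ 2)
      ≤ ∑ k ∈ Finset.range m, Real.cos (2 * k * t) := by
    calc (m : ℝ) * (1 - 2 * (m : ℝ) ^ 2 * t ^ 2)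
        = ∑ _k ∈ Finset.range m, (1 - 2 * (m : ℝ) ^ 2 * t ^ 2) := by
          rw [Finset.sum_const, Finset.card_range, nsmul_eq_mul]
      _ ≤ _ := Finset.sum_le_sum hterm
  have hm0' : (0 : ℝ) < (m : ℝ) := by exact_mod_cast hm0
  have h2 : 1 - 2 * (m : ℝ) ^ 2 * t ^ 2
      ≤ (m : ℝ)⁻¹ * ∑ k ∈ Finset.range m, Real.cos (2 * k * t) := by
    rw [inv_mul_eq_div, le_div_iff₀ hm0']
    linarith [hsum, mul_comm ((m : ℝ)) (1 - 2 * (m : ℝ) ^ 2 * t ^ 2)]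
  -- Jordan's inequality : t^2 ≤ (π/2)^2 * x^2
  have hjordan : t ^ 2 ≤ Real.pi ^ 2 / 4 * x ^ 2 := by
    have habs : 2 / Real.pi * |t| ≤ Real.sin |t| := by
      refine Real.mul_le_sin (abs_nonneg t) ?_
      rw [abs_le]; exact ⟨ht1, ht2⟩
    have hsin : Real.sin |t| = |x| := by
      rcases le_or_gt 0 t with h | h
      · have hs : 0 ≤ Real.sin t :=
          Real.sin_nonneg_of_nonneg_of_le_pi h (by linarith)
        rw [abs_of_nonneg h, hxt, abs_of_nonneg (hxt ▸ hs)]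
      · have hs : Real.sin t ≤ 0 :=
          Real.sin_nonpos_of_nonpos_of_neg_pi_le h.le (by linarith)
        rw [abs_of_neg h, Real.sin_neg, hxt, abs_of_nonpos (hxt ▸ hs)]
    have h3 : 2 * |t| ≤ Real.pi * |x| := by
      rw [hsin, div_mul_eq_mul_div, div_le_iff₀ hpi] at habs
      linarith [habs, mul_comm (|x|) Real.pi]
    have h4 := mul_self_le_mul_self (by positivity : (0:ℝ) ≤ 2 * |t|) h3
    nlinarith [h4, sq_abs t, sq_abs x]
  nlinarith [h2, hjordan, sq_nonneg (m : ℝ)]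
end
end
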